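/- arXiv:1801.07814 — 8 statements merged into one kernel-verified Lean document; each statement's English description precedes it below -/
import Mathlib

section
/- Let $n \geq 0$, $k \geq 1$, and probabilities $0 < P_0 \leq \cdots \leq P_k = 1$. Let $M_n = M_n^0$ be the random variable defined recursively by: for $\ell < k$, $P(M_n^\ell = m) = \binom{n}{m} P_\ell^m (1-P_\ell)^{n-m} + (1-P_\ell)^n P(M_n^{\ell+1} = m)$ for $m > 0$, $P(M_n^\ell = 0) = [n=0]$, and $M_n^k = n$. Then $E[M_n] = n P_0 + \sum_{\ell=1}^{k} n P_\ell \prod_{j < \ell} (1-P_j)^n$. -/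
/-! Conditioning on the first stage: at stage `ℓ` the number of successes is `Bin(n, P ℓ)`, with
mean `n P ℓ`, and with probability `(1 - P ℓ)^n` nobody succeeds and the election restarts at stage
`ℓ + 1`. So the means `E ℓ` of `M_n^ℓ` obey `E ℓ = n P ℓ + (1 - P ℓ)^n E (ℓ + 1)` with
`E k = n = n P k`, and unrolling this affine recurrence gives the formula. -/

open Finset

theorem sum_range_mul_choose_mul_pow_mul_one_sub_pow {R : Type*} [CommRing R] (n : ℕ) (p : R) :
    ∑ m ∈ range (n + 1), (m : R) * (n.choose m * p ^ m * (1 - p) ^ (n - m)) = n * p := by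
  simpa [bernsteinPolynomial, Polynomial.eval_finsetSum, nsmul_eq_mul] using
    congrArg (Polynomial.eval p) (bernsteinPolynomial.sum_smul R n)

theorem eq_sum_range_mul_prod_add_prod_mul {R : Type*} [CommSemiring R] {E a c : ℕ → R} {d : ℕ}
    (h : ∀ ℓ < d, E ℓ = a ℓ + c ℓ * E (ℓ + 1)) :
    E 0 = ∑ j ∈ range d, a j * ∏ i ∈ range j, c i + (∏ i ∈ range d, c i) * E d := by
  induction d with
  | zero => simp
  | succ d ih =>
    rw [ih fun ℓ hℓ => h ℓ (by omega), h d d.lt_succ_self, sum_range_succ, prod_range_succ]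
    ring

section Staircase

variable {n k : ℕ} {P : ℕ → ℝ} {prob : ℕ → ℕ → ℝ}

theorem staircase_prob_eq_zero_of_lt
    (hprobk : ∀ m, prob k m = if m = n then 1 else 0)
    (hprobrec : ∀ ℓ m, ℓ < k → 0 < m →
      prob ℓ m = (n.choose m : ℝ) * P ℓ ^ m * (1 - P ℓ) ^ (n - m)
        + (1 - P ℓ) ^ n * prob (ℓ + 1) m)
    {ℓ m : ℕ} (hℓ : ℓ ≤ k) (hm : n < m) : prob ℓ m = 0 := by
  induction hℓ using Nat.decreasingInduction with
  | self => rw [hprobk, if_neg hm.ne']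
  | of_succ ℓ hℓ ih => rw [hprobrec ℓ m hℓ (by omega), Nat.choose_eq_zero_of_lt hm, ih]; simp

theorem staircase_mean_eq_add_mul
    (hprobrec : ∀ ℓ m, ℓ < k → 0 < m →
      prob ℓ m = (n.choose m : ℝ) * P ℓ ^ m * (1 - P ℓ) ^ (n - m)
        + (1 - P ℓ) ^ n * prob (ℓ + 1) m)
    {ℓ : ℕ} (hℓ : ℓ < k) :
    ∑ m ∈ range (n + 1), (m : ℝ) * prob ℓ m
      = n * P ℓ + (1 - P ℓ) ^ n * ∑ m ∈ range (n + 1), (m : ℝ) * prob (ℓ + 1) m := by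
  have hsplit : ∀ m ∈ range (n + 1), (m : ℝ) * prob ℓ m
      = (m : ℝ) * (n.choose m * P ℓ ^ m * (1 - P ℓ) ^ (n - m))
        + (1 - P ℓ) ^ n * ((m : ℝ) * prob (ℓ + 1) m) := by
    intro m _
    rcases Nat.eq_zero_or_pos m with rfl | hm
    · simp
    · rw [hprobrec ℓ m hℓ hm]; ring
  rw [sum_congr rfl hsplit, sum_add_distrib, ← mul_sum,
    sum_range_mul_choose_mul_pow_mul_one_sub_pow]

end Staircase

theorem stmt1_general (n k : ℕ) (P : ℕ → ℝ)
    (hPk : P k = 1)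
    (prob : ℕ → ℕ → ℝ)
    (hprobk : ∀ m, prob k m = if m = n then 1 else 0)
    (hprobrec : ∀ ℓ m, ℓ < k → 0 < m →
      prob ℓ m = (n.choose m : ℝ) * P ℓ ^ m * (1 - P ℓ) ^ (n - m)
        + (1 - P ℓ) ^ n * prob (ℓ + 1) m) :
    ∑' m : ℕ, (m : ℝ) * prob 0 m
      = (n : ℝ) * P 0 + ∑ ℓ ∈ Finset.Icc 1 k,
          (n : ℝ) * P ℓ * ∏ j ∈ Finset.range ℓ, (1 - P j) ^ n := by
  have hfinite : ∑' m : ℕ, (m : ℝ) * prob 0 m = ∑ m ∈ range (n + 1), (m : ℝ) * prob 0 m :=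
    tsum_eq_sum fun m hm => by
      rw [staircase_prob_eq_zero_of_lt hprobk hprobrec k.zero_le (by simpa using hm), mul_zero]
  have hlast : ∑ m ∈ range (n + 1), (m : ℝ) * prob k m = n * P k := by
    simp [hprobk, hPk]
  have hrange : range (k + 1) = insert 0 (Icc 1 k) := by
    rw [Nat.range_succ_eq_Icc_zero, ← insert_Icc_add_one_left_eq_Icc k.zero_le, zero_add]
  calc ∑' m : ℕ, (m : ℝ) * prob 0 m
      = ∑ ℓ ∈ range (k + 1), (n : ℝ) * P ℓ * ∏ j ∈ range ℓ, (1 - P j) ^ n := by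
        rw [hfinite, eq_sum_range_mul_prod_add_prod_mul
            (E := fun ℓ => ∑ m ∈ range (n + 1), (m : ℝ) * prob ℓ m)
            fun ℓ hℓ => staircase_mean_eq_add_mul hprobrec hℓ,
          hlast, sum_range_succ]
        ring
    _ = _ := by rw [hrange, sum_insert (by simp)]; simp

/-- Expected number of mined blocks in the staircase election:
`E[M_n] = n P_0 + ∑_{ℓ=1}^{k} n P_ℓ ∏_{j<ℓ} (1-P_j)^n`. -/
theorem stmt1 (n k : ℕ) (hk : 1 ≤ k) (P : ℕ → ℝ)
    (hP0 : 0 < P 0) (hmono : ∀ i, i < k → P i ≤ P (i + 1)) (hPk : P k = 1)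
    (prob : ℕ → ℕ → ℝ)
    (hprobk : ∀ m, prob k m = if m = n then 1 else 0)
    (hprob0 : ∀ ℓ, ℓ < k → prob ℓ 0 = if n = 0 then 1 else 0)
    (hprobrec : ∀ ℓ m, ℓ < k → 0 < m →
      prob ℓ m = (n.choose m : ℝ) * P ℓ ^ m * (1 - P ℓ) ^ (n - m)
        + (1 - P ℓ) ^ n * prob (ℓ + 1) m) :
    ∑' m : ℕ, (m : ℝ) * prob 0 m
      = (n : ℝ) * P 0 + ∑ ℓ ∈ Finset.Icc 1 k,
          (n : ℝ) * P ℓ * ∏ j ∈ Finset.range ℓ, (1 - P j) ^ n :=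
  stmt1_general n k P hPk prob hprobk hprobrec
end

section
/- Let $N \geq 2$, $k \geq 1$, $p = N^{-1/k}$, and $P_\ell = p^{k-\ell}$ for $0 \leq \ell \leq k$ (so $P_0 = 1/N$ and $P_k = 1$). For $n \leq N$, define $E[M_n] = n P_0 + \sum_{\ell=1}^{k} n P_\ell \prod_{j<\ell}(1-P_j)^n$. Then there exists a constant $C$ (independent of $n$ and $N$) such that $E[M_n] \leq C \cdot N^{1/k}$ for all $0 \leq n \leq N$. -/
/-!
With `q = N^{1/k}` consecutive call probabilities differ by the factor `q`, so dropping all but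
the last factor of the product bounds the `ℓ`-th term by `q · n P_{ℓ-1} (1 - P_{ℓ-1})^n`, and
`n x (1 - x)^n ≤ n x e^{-n x} ≤ e^{-1}`. The base term `n P_0 = n / N` is at most `1 ≤ q`, so
`E[M_n] ≤ (k + 1) N^{1/k}`.
-/

open Finset

lemma mul_mul_one_sub_pow_le_exp_neg_one {x : ℝ} (hx : x ≤ 1) (n : ℕ) :
    n * x * (1 - x) ^ n ≤ Real.exp (-1) := by
  have hpow : (1 - x) ^ n ≤ Real.exp (-(n * x)) := by
    calc (1 - x) ^ n ≤ Real.exp (-x) ^ n :=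
          pow_le_pow_left₀ (by linarith) (Real.one_sub_le_exp_neg x) n
      _ = Real.exp (-(n * x)) := by rw [← Real.exp_nat_mul, mul_neg]
  rcases le_or_gt 0 x with hx0 | hx0
  · calc n * x * (1 - x) ^ n ≤ n * x * Real.exp (-(n * x)) := by gcongr
      _ ≤ Real.exp (-1) := Real.mul_exp_neg_le_exp_neg_one _
  · have : n * x * (1 - x) ^ n ≤ 0 :=
      mul_nonpos_of_nonpos_of_nonneg (mul_nonpos_of_nonneg_of_nonpos n.cast_nonneg hx0.le)
        (pow_nonneg (by linarith) n)
    exact this.trans (Real.exp_pos _).le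

section Staircase

variable {P : ℕ → ℝ} {q : ℝ} (hP0 : ∀ j, 0 ≤ P j) (hP1 : ∀ j, P j ≤ 1) (n : ℕ)
include hP0 hP1

lemma mul_mul_prod_one_sub_pow_le (hq : 0 ≤ q) {m : ℕ} (hstep : P (m + 1) ≤ q * P m) :
    n * P (m + 1) * ∏ j ∈ range (m + 1), (1 - P j) ^ n ≤ q := by
  have hfactor : ∀ j, 0 ≤ (1 - P j) ^ n := fun j => pow_nonneg (by linarith [hP1 j]) n
  have hprod : ∏ j ∈ range (m + 1), (1 - P j) ^ n ≤ (1 - P m) ^ n := by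
    rw [prod_range_succ]
    exact mul_le_of_le_one_left (hfactor m) <| prod_le_one (fun j _ => hfactor j)
      fun j _ => pow_le_one₀ (by linarith [hP1 j]) (by linarith [hP0 j])
  have hlevel : n * P m * (1 - P m) ^ n ≤ 1 :=
    (mul_mul_one_sub_pow_le_exp_neg_one (hP1 m) n).trans (Real.exp_le_one_iff.mpr (by norm_num))
  calc n * P (m + 1) * ∏ j ∈ range (m + 1), (1 - P j) ^ n
      ≤ n * (q * P m) * (1 - P m) ^ n := by
        gcongr
        · exact prod_nonneg fun j _ => hfactor j
        · exact mul_nonneg n.cast_nonneg (mul_nonneg hq (hP0 m))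
    _ = q * (n * P m * (1 - P m) ^ n) := by ring
    _ ≤ q := mul_le_of_le_one_right hq hlevel

lemma staircase_sum_le (hq : 0 ≤ q) {k : ℕ} (hstep : ∀ ℓ ∈ Icc 1 k, P ℓ ≤ q * P (ℓ - 1))
    (hbase : n * P 0 ≤ q) :
    n * P 0 + ∑ ℓ ∈ Icc 1 k, n * P ℓ * ∏ j ∈ range ℓ, (1 - P j) ^ n ≤ (k + 1) * q := by
  have hterm : ∀ ℓ ∈ Icc 1 k, n * P ℓ * ∏ j ∈ range ℓ, (1 - P j) ^ n ≤ q := by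
    intro ℓ hℓ
    obtain ⟨m, rfl⟩ : ∃ m, ℓ = m + 1 := Nat.exists_eq_add_one.mpr (mem_Icc.mp hℓ).1
    exact mul_mul_prod_one_sub_pow_le hP0 hP1 n hq (hstep _ hℓ)
  calc n * P 0 + ∑ ℓ ∈ Icc 1 k, n * P ℓ * ∏ j ∈ range ℓ, (1 - P j) ^ n
      ≤ q + ∑ _ℓ ∈ Icc 1 k, q := add_le_add hbase (sum_le_sum hterm)
    _ = (k + 1) * q := by rw [sum_const, Nat.card_Icc, nsmul_eq_mul]; push_cast; ring

end Staircase

/-- Scalability of the Green Coin protocol: with `p = N^{-1/k}` and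
`P_ℓ = p^{k-ℓ}`, the expected number of mined blocks
`E[M_n] = n P_0 + ∑_{ℓ=1}^k n P_ℓ ∏_{j<ℓ}(1-P_j)^n` is `O(N^{1/k})`
uniformly in `0 ≤ n ≤ N`. -/
theorem stmt2 (k : ℕ) (hk : 1 ≤ k) :
    ∃ C : ℝ, ∀ N : ℕ, 2 ≤ N →
      ∀ p : ℝ, p = (N : ℝ) ^ (-(1 : ℝ) / (k : ℝ)) →
      ∀ P : ℕ → ℝ, (∀ ℓ, P ℓ = p ^ (k - ℓ)) →
      ∀ n : ℕ, n ≤ N →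
        (n : ℝ) * P 0 + ∑ ℓ ∈ Finset.Icc 1 k,
            (n : ℝ) * P ℓ * ∏ j ∈ Finset.range ℓ, (1 - P j) ^ n
          ≤ C * (N : ℝ) ^ ((1 : ℝ) / (k : ℝ)) := by
  refine ⟨k + 1, fun N hN p hp P hP n hn => ?_⟩
  set q : ℝ := (N : ℝ) ^ ((1 : ℝ) / k)
  have hN0 : (0 : ℝ) ≤ N := N.cast_nonneg
  have hk0 : k ≠ 0 := by omega
  have hq1 : 1 ≤ q := Real.one_le_rpow (by exact_mod_cast (by omega : 1 ≤ N)) (by positivity)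
  have hqk : q ^ k = N := by simpa only [q, one_div] using Real.rpow_inv_natCast_pow hN0 hk0
  have hpq : p = q⁻¹ := by rw [hp, neg_div, Real.rpow_neg hN0]
  have hP0 : ∀ j, 0 ≤ P j := fun j => by rw [hP, hpq]; positivity
  have hP1 : ∀ j, P j ≤ 1 := fun j => by
    rw [hP, hpq]; exact pow_le_one₀ (by positivity) (inv_le_one_of_one_le₀ hq1)
  refine staircase_sum_le hP0 hP1 n (by positivity) (fun ℓ hℓ => ?_) ?_
  · have hsucc : k - (ℓ - 1) = k - ℓ + 1 := by have := mem_Icc.mp hℓ; omega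
    rw [hP, hP, hsucc, pow_succ, hpq]
    exact le_of_eq (by field_simp)
  · rw [hP, Nat.sub_zero, hpq, inv_pow, hqk]
    exact (mul_inv_le_one_of_le₀ (by exact_mod_cast hn) hN0).trans hq1
end

section
/- Let $N \geq 2$, $k \geq 1$, $p = N^{-1/k}$, $P_\ell = p^{k-\ell}$ for $0 \leq \ell \leq k$, and let $M_n$ be the random number of mined blocks out of $n \leq N$ contenders (the staircase election random variable with generating function $E[u^{M_n}] = (1+P_0(u-1))^n - (1-P_0)^n + \sum_{0<\ell<k}\prod_{j<\ell}(1-P_j)^n((1+P_\ell(u-1))^n-(1-P_\ell)^n) + u^n\prod_{j<k}(1-P_j)^n$). Then for all integers $m > 0$: $P(M_n > m) \leq \frac{k + e^p}{(1+p)^m}$. -/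
/-- Large-deviation tail bound: with `p = N^{-1/k}`, `P_ℓ = p^{k-ℓ}` and `n ≤ N`,
the staircase election random variable `M_n` satisfies
`P(M_n > m) ≤ (k + e^p)/(1+p)^m` for all integers `m > 0`. -/
theorem stmt8 (N k : ℕ) (hN : 2 ≤ N) (hk : 1 ≤ k)
    (p : ℝ) (hp : p = (N : ℝ) ^ (-(1 : ℝ) / (k : ℝ)))
    (P : ℕ → ℝ) (hP : ∀ ℓ, P ℓ = p ^ (k - ℓ))
    (n : ℕ) (hn : n ≤ N)
    (prob : ℕ → ℕ → ℝ)
    (hprobk : ∀ m, prob k m = if m = n then 1 else 0)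
    (hprob0 : ∀ ℓ, ℓ < k → prob ℓ 0 = if n = 0 then 1 else 0)
    (hprobrec : ∀ ℓ m, ℓ < k → 0 < m →
      prob ℓ m = (n.choose m : ℝ) * P ℓ ^ m * (1 - P ℓ) ^ (n - m)
        + (1 - P ℓ) ^ n * prob (ℓ + 1) m)
    (m : ℕ) (hm : 0 < m) :
    ∑' j : ℕ, prob 0 (m + 1 + j) ≤ ((k : ℝ) + Real.exp p) / (1 + p) ^ m := by
  have hN1 : (1:ℝ) ≤ (N:ℝ) := by exact_mod_cast Nat.one_le_of_lt hN
  have hNpos : (0:ℝ) < (N:ℝ) := by linarith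
  have hp0 : 0 < p := by rw [hp]; exact Real.rpow_pos_of_pos hNpos _
  have hp1 : p ≤ 1 := by
    rw [hp]
    apply Real.rpow_le_one_of_one_le_of_nonpos hN1
    apply div_nonpos_of_nonpos_of_nonneg <;> [norm_num; positivity]
  have hpk : p ^ k = ((N:ℝ))⁻¹ := by
    rw [hp, ← Real.rpow_natCast ((N:ℝ) ^ (-(1:ℝ) / (k:ℝ))) k, ← Real.rpow_mul (le_of_lt hNpos)]
    have hk0 : (k:ℝ) ≠ 0 := by
      exact Nat.cast_ne_zero.mpr (by omega)
    have h2 : (-(1:ℝ) / (k:ℝ)) * (k:ℝ) = -1 := by field_simp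
    rw [h2, Real.rpow_neg_one]
  have hPnn : ∀ ℓ, 0 ≤ P ℓ := by intro ℓ; rw [hP]; positivity
  have hPle1 : ∀ ℓ, P ℓ ≤ 1 := by
    intro ℓ; rw [hP]; exact pow_le_one₀ (le_of_lt hp0) hp1
  set G : ℕ → ℝ := fun ℓ => ∑ s ∈ Finset.range (n+1), (1+p)^s * prob ℓ s with hG
  have main : ∀ d ℓ, ℓ + d = k →
      (∀ m', 0 ≤ prob ℓ m') ∧ (∀ m', n < m' → prob ℓ m' = 0) ∧
      G ℓ ≤ (1 + p^(d+1))^n + d := by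
    intro d
    induction d with
    | zero =>
      intro ℓ hℓ
      have hℓk : ℓ = k := by omega
      subst hℓk
      refine ⟨?_, ?_, ?_⟩
      · intro m'; rw [hprobk]; split <;> norm_num
      · intro m' hm'; rw [hprobk]; split
        · omega
        · rfl
      · have hGk : G ℓ = (1+p)^n := by
          rw [hG]
          simp only [hprobk]
          rw [Finset.sum_eq_single n]
          · simp
          · intro b _ hb; simp [hb]
          · intro hnot; exact absurd (Finset.self_mem_range_succ n) hnot
        rw [hGk]
        simp
      | succ d ih =>
      intro ℓ hℓ
      have hlk : ℓ < k := by omega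
      obtain ⟨hnn1, hvan1, hG1⟩ := ih (ℓ+1) (by omega)
      have hkl : k - ℓ = d + 1 := by omega
      have hPl : P ℓ = p ^ (d+1) := by rw [hP, hkl]
      have hApos : (0:ℝ) ≤ 1 - P ℓ := by linarith [hPle1 ℓ]
      have hAle1 : (1 - P ℓ) ≤ 1 := by linarith [hPnn ℓ]
      have hann : (0:ℝ) ≤ (1 - P ℓ)^n := pow_nonneg hApos n
      have hale1 : (1 - P ℓ)^n ≤ 1 := pow_le_one₀ hApos hAle1
      have hnn : ∀ m', 0 ≤ prob ℓ m' := by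
        intro m'
        match m' with
        | 0 => rw [hprob0 ℓ hlk]; split <;> norm_num
        | (m'+1) =>
          rw [hprobrec ℓ (m'+1) hlk (Nat.succ_pos _)]
          have h1 : (0:ℝ) ≤ (n.choose (m'+1) : ℝ) * P ℓ ^ (m'+1) * (1 - P ℓ) ^ (n - (m'+1)) := by
            apply mul_nonneg (mul_nonneg (by positivity) (pow_nonneg (hPnn ℓ) _)) (pow_nonneg hApos _)
          have h2 : (0:ℝ) ≤ (1 - P ℓ)^n * prob (ℓ+1) (m'+1) := mul_nonneg hann (hnn1 _)
          linarith
      refine ⟨hnn, ?_, ?_⟩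
      · intro m' hm'
        have hm'0 : 0 < m' := by omega
        rw [hprobrec ℓ m' hlk hm'0, hvan1 m' hm', Nat.choose_eq_zero_of_lt hm']
        simp
      · -- the generating-function bound
        have e1 : G ℓ = (∑ i ∈ Finset.range n, (1+p)^(i+1) * prob ℓ (i+1)) + prob ℓ 0 := by
          simp only [hG]
          rw [Finset.sum_range_succ' (fun s => (1+p)^s * prob ℓ s) n]
          simp
        have e2 : ∀ i ∈ Finset.range n, (1+p)^(i+1) * prob ℓ (i+1)
            = (1+p)^(i+1) * ((n.choose (i+1) : ℝ) * P ℓ ^ (i+1) * (1 - P ℓ) ^ (n - (i+1)))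
              + (1 - P ℓ)^n * ((1+p)^(i+1) * prob (ℓ+1) (i+1)) := by
          intro i _
          rw [hprobrec ℓ (i+1) hlk (Nat.succ_pos _)]
          ring
        rw [Finset.sum_congr rfl e2, Finset.sum_add_distrib, ← Finset.mul_sum] at e1
        -- binomial identity
        have ebin : (∑ s ∈ Finset.range (n+1),
            (1+p)^s * ((n.choose s : ℝ) * P ℓ ^ s * (1 - P ℓ) ^ (n - s))) = (1 + p * P ℓ)^n := by
          have hsplit : (1 + p * P ℓ) = (P ℓ * (1+p)) + (1 - P ℓ) := by ring
          rw [hsplit, add_pow]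
          apply Finset.sum_congr rfl
          intro s _
          rw [mul_pow]
          ring
        rw [Finset.sum_range_succ' (fun s => (1+p)^s * ((n.choose s : ℝ) * P ℓ ^ s * (1 - P ℓ) ^ (n - s))) n] at ebin
        simp only [pow_zero, Nat.choose_zero_right, Nat.cast_one, one_mul, Nat.sub_zero] at ebin
        -- ebin : (∑ i ∈ range n, bin(i+1)) + (1-Pℓ)^n = (1+p*Pℓ)^n
        have e3 : G (ℓ+1) = (∑ i ∈ Finset.range n, (1+p)^(i+1) * prob (ℓ+1) (i+1)) + prob (ℓ+1) 0 := by
          simp only [hG]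
          rw [Finset.sum_range_succ' (fun s => (1+p)^s * prob (ℓ+1) s) n]
          simp
        have hsum2 : (∑ i ∈ Finset.range n, (1+p)^(i+1) * prob (ℓ+1) (i+1)) ≤ G (ℓ+1) := by
          rw [e3]; linarith [hnn1 0]
        have hsum2nn : 0 ≤ (∑ i ∈ Finset.range n, (1+p)^(i+1) * prob (ℓ+1) (i+1)) := by
          apply Finset.sum_nonneg
          intro i _
          exact mul_nonneg (by positivity) (hnn1 _)
        -- key products
        have hprod : (1 - P ℓ)^n * (1 + p^(d+1))^n ≤ 1 := by
          rw [← mul_pow]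
          apply pow_le_one₀
          · rw [hPl]; nlinarith [pow_nonneg hp0.le (d+1), pow_le_one₀ (n := d+1) hp0.le hp1]
          · rw [hPl]; nlinarith [pow_nonneg hp0.le (d+1), pow_le_one₀ (n := d+1) hp0.le hp1]
        have hGl1 : (1 - P ℓ)^n * G (ℓ+1) ≤ 1 + (1 - P ℓ)^n * d := by
          have := mul_le_mul_of_nonneg_left hG1 hann
          have h2 : (1 - P ℓ)^n * ((1 + p^(d+1))^n + d) = (1 - P ℓ)^n * (1 + p^(d+1))^n + (1 - P ℓ)^n * d := by ring
          linarith
        have hzero : prob ℓ 0 - (1 - P ℓ)^n ≤ 0 := by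
          rw [hprob0 ℓ hlk]
          rcases Nat.eq_zero_or_pos n with h | h
          · subst h; simp
          · have : n ≠ 0 := by omega
            simp only [this, if_false]
            linarith
        have hppl : p * P ℓ = p ^ (d+1+1) := by rw [hPl]; ring
        have hdd : (1 - P ℓ)^n * (d:ℝ) ≤ d := by
          nlinarith [Nat.cast_nonneg (α := ℝ) d]
        -- assemble
        have hGle : G ℓ ≤ ((1 + p*P ℓ)^n - (1 - P ℓ)^n) + prob ℓ 0 + (1 - P ℓ)^n * G (ℓ+1) := by
          rw [e1]
          have hb : (∑ i ∈ Finset.range n, (1+p)^(i+1) *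
              ((n.choose (i+1) : ℝ) * P ℓ ^ (i+1) * (1 - P ℓ) ^ (n - (i+1))))
              = (1 + p * P ℓ)^n - (1 - P ℓ)^n := by linarith [ebin]
          rw [hb]
          have := mul_le_mul_of_nonneg_left hsum2 hann
          linarith
        rw [hppl] at hGle
        push_cast
        linarith
  obtain ⟨hnn0, hvan0, hG0⟩ := main k 0 (by omega)
  -- (1+p^{k+1})^n ≤ exp p
  have hexp : (1 + p^(k+1))^n ≤ Real.exp p := by
    have h1 : (1 + p^(k+1)) ≤ Real.exp (p^(k+1)) := by
      have := Real.add_one_le_exp (p^(k+1))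
      linarith
    calc (1 + p^(k+1))^n ≤ (Real.exp (p^(k+1)))^n := by
            apply pow_le_pow_left₀ (by positivity) h1
      _ = Real.exp ((n:ℝ) * p^(k+1)) := by rw [← Real.exp_nat_mul]
      _ ≤ Real.exp p := by
            apply Real.exp_le_exp.mpr
            have : (n:ℝ) * p^(k+1) = ((n:ℝ) / N) * p := by
              rw [pow_succ, hpk]; field_simp
            rw [this]
            have hdiv : (n:ℝ)/N ≤ 1 := by
              rw [div_le_one hNpos]; exact_mod_cast hn
            nlinarith
  have hG0' : G 0 ≤ (k:ℝ) + Real.exp p := by linarith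
  -- tsum to finite sum
  have htsum : ∑' j : ℕ, prob 0 (m+1+j) = ∑ j ∈ Finset.range (n+1), prob 0 (m+1+j) := by
    apply tsum_eq_sum
    intro j hj
    apply hvan0
    simp only [Finset.mem_range, not_lt] at hj
    omega
  rw [htsum]
  have hpow : (0:ℝ) < (1+p)^m := by positivity
  rw [le_div_iff₀ hpow]
  have h1p : (1:ℝ) ≤ 1 + p := by linarith
  calc (∑ j ∈ Finset.range (n+1), prob 0 (m+1+j)) * (1+p)^m
      = ∑ j ∈ Finset.range (n+1), (1+p)^m * prob 0 (m+1+j) := by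
        rw [Finset.sum_mul]; apply Finset.sum_congr rfl; intro j _; ring
    _ ≤ ∑ j ∈ Finset.range (n+1), (1+p)^(m+1+j) * prob 0 (m+1+j) := by
        apply Finset.sum_le_sum
        intro j _
        exact mul_le_mul_of_nonneg_right (pow_le_pow_right₀ h1p (by omega)) (hnn0 _)
    _ = ∑ s ∈ Finset.Ico (m+1) (m+1+(n+1)), (1+p)^s * prob 0 s := by
        rw [Finset.sum_Ico_eq_sum_range]
        simp
    _ ≤ ∑ s ∈ Finset.range (m+n+2), (1+p)^s * prob 0 s := by
        apply Finset.sum_le_sum_of_subset_of_nonneg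
        · intro x hx
          simp only [Finset.mem_Ico] at hx
          simp only [Finset.mem_range]
          omega
        · intro s _ _
          exact mul_nonneg (by positivity) (hnn0 _)
    _ = G 0 := by
        simp only [hG]
        symm
        apply Finset.sum_subset
        · intro x hx
          simp only [Finset.mem_range] at hx ⊢
          omega
        · intro s _ hs
          simp only [Finset.mem_range, not_lt] at hs
          rw [hvan0 s (by omega), mul_zero]
    _ ≤ (k:ℝ) + Real.exp p := hG0'
end

section
/- Let $n \geq 1$, $k \geq 1$, and probabilities $0 = P_{-1} < P_0 \leq P_1 \leq \cdots \leq P_k = 1$. Let $X_1, \ldots, X_n$ be i.i.d. uniform on $[0,1]$, and define for each $i$ the level $L_i = \min\{\ell \geq 0 : X_i \leq P_\ell\}$. Let $M_n$ be the number of indices $i$ achieving the minimum level $L^* = \min_i L_i$. Then for $m > 0$: $P(M_n = m) = \binom{n}{m} P_0^m (1-P_0)^{n-m} + \sum_{\ell=1}^{k-1} \binom{n}{m}(P_\ell - P_{\ell-1})^m (1-P_\ell)^{n-m} + [m = n](1-P_{k-1})^n$. -/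
open MeasureTheory
open scoped Classical

/-!
Almost surely every hash value lies in `(0, 1]`, and there the level of `x` is `ℓ` exactly
when `P (ℓ - 1) < x ≤ P ℓ` (with `P (-1) = 0`). So for `m > 0`, `M_n = m` holds iff for some
`ℓ ≤ k` all values exceed `P (ℓ - 1)` and exactly `m` of them are `≤ P ℓ`; these events are
disjoint, since `ℓ` is then the minimum level, and by independence the `ℓ`-th has probability
`C(n, m) (P ℓ - P (ℓ - 1))^m (1 - P ℓ)^(n - m)`. For `ℓ = k` the last factor vanishes unless
`m = n`.
-/

section Binomial

variable {ι α : Type*} [Fintype ι]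

lemma mem_pi_ite_inter_sdiff_iff {S B : Set α} [DecidablePred (· ∈ B)] {T : Finset ι}
    {ω : ι → α} :
    ω ∈ Set.univ.pi (fun i => if i ∈ T then S ∩ B else S \ B) ↔
      (∀ i, ω i ∈ S) ∧ (Finset.univ.filter fun i => ω i ∈ B) = T := by
  simp only [Set.mem_pi, Set.mem_univ, true_implies, Finset.ext_iff, Finset.mem_filter,
    Finset.mem_univ, true_and, ← forall_and]
  refine forall_congr' fun i => ?_
  by_cases hi : i ∈ T <;> simp [hi]

lemma setOf_card_filter_mem_eq_biUnion (S B : Set α) [DecidablePred (· ∈ B)] (m : ℕ) :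
    {ω : ι → α | (∀ i, ω i ∈ S) ∧ (Finset.univ.filter fun i => ω i ∈ B).card = m}
      = ⋃ T ∈ Finset.powersetCard m Finset.univ,
          Set.univ.pi fun i => if i ∈ T then S ∩ B else S \ B := by
  ext ω
  simp only [Set.mem_ofPred_eq, Set.mem_iUnion, exists_prop, Finset.mem_powersetCard_univ,
    mem_pi_ite_inter_sdiff_iff]
  exact ⟨fun h => ⟨_, h.2, h.1, rfl⟩, fun ⟨T, hT, hS, hB⟩ => ⟨hS, hB ▸ hT⟩⟩

variable [MeasurableSpace α] {S B : Set α}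

lemma measurableSet_pi_ite_inter_sdiff (hS : MeasurableSet S) (hB : MeasurableSet B)
    (T : Finset ι) :
    MeasurableSet (Set.univ.pi fun i => if i ∈ T then S ∩ B else S \ B) :=
  .univ_pi fun i => by split_ifs; exacts [hS.inter hB, hS.diff hB]

variable [DecidablePred (· ∈ B)]

lemma measurableSet_setOf_card_filter_mem (hS : MeasurableSet S) (hB : MeasurableSet B)
    (m : ℕ) :
    MeasurableSet {ω : ι → α |
      (∀ i, ω i ∈ S) ∧ (Finset.univ.filter fun i => ω i ∈ B).card = m} := by
  rw [setOf_card_filter_mem_eq_biUnion]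
  exact Finset.measurableSet_biUnion _ fun T _ => measurableSet_pi_ite_inter_sdiff hS hB T

lemma measure_pi_setOf_card_filter_mem (ν : Measure α) [SigmaFinite ν]
    (hS : MeasurableSet S) (hB : MeasurableSet B) (m : ℕ) :
    Measure.pi (fun _ : ι => ν)
        {ω | (∀ i, ω i ∈ S) ∧ (Finset.univ.filter fun i => ω i ∈ B).card = m}
      = (Fintype.card ι).choose m * ν (S ∩ B) ^ m * ν (S \ B) ^ (Fintype.card ι - m) := by
  have hdisj : (Finset.powersetCard m (Finset.univ : Finset ι) : Set (Finset ι)).PairwiseDisjoint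
      fun T => Set.univ.pi fun i => if i ∈ T then S ∩ B else S \ B :=
    fun T _ T' _ hTT' => Set.disjoint_left.mpr fun ω hT hT' =>
      hTT' ((mem_pi_ite_inter_sdiff_iff.mp hT).2.symm.trans
        (mem_pi_ite_inter_sdiff_iff.mp hT').2)
  have hbox : ∀ T ∈ Finset.powersetCard m (Finset.univ : Finset ι),
      Measure.pi (fun _ : ι => ν) (Set.univ.pi fun i => if i ∈ T then S ∩ B else S \ B)
        = ν (S ∩ B) ^ m * ν (S \ B) ^ (Fintype.card ι - m) := by
    intro T hT
    rw [Finset.mem_powersetCard_univ] at hT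
    simp [Measure.pi_pi, apply_ite ν, Finset.prod_ite, Finset.filter_not,
      Finset.card_univ_sdiff, hT]
  rw [setOf_card_filter_mem_eq_biUnion, measure_biUnion_finset hdisj
      fun T _ => measurableSet_pi_ite_inter_sdiff hS hB T,
    Finset.sum_congr rfl hbox, Finset.sum_const, Finset.card_powersetCard, Finset.card_univ,
    nsmul_eq_mul, mul_assoc]

end Binomial

noncomputable def level (P : ℕ → ℝ) (x : ℝ) : ℕ := sInf {ℓ | x ≤ P ℓ}

/-- The paper's `P_{ℓ-1}`, with the convention `P_{-1} = 0`. -/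
def lowerThreshold (P : ℕ → ℝ) : ℕ → ℝ
  | 0 => 0
  | ℓ + 1 => P ℓ

section Level

variable {P : ℕ → ℝ} {k ℓ : ℕ} {x : ℝ}

lemma level_le_of_le (h : x ≤ P ℓ) : level P x ≤ ℓ := Nat.sInf_le h

lemma le_apply_level (hx : x ≤ P k) : x ≤ P (level P x) :=
  Nat.sInf_mem (s := {ℓ | x ≤ P ℓ}) ⟨k, hx⟩

lemma level_le_iff (hP : MonotoneOn P (Set.Iic k)) (hx : x ≤ P k) (hℓ : ℓ ≤ k) :
    level P x ≤ ℓ ↔ x ≤ P ℓ :=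
  ⟨fun h => (le_apply_level hx).trans (hP (h.trans hℓ) hℓ h), level_le_of_le⟩

lemma le_level_of_lowerThreshold_lt (hP : MonotoneOn P (Set.Iic k)) (hx : x ≤ P k)
    (hℓ : ℓ ≤ k + 1) (h : lowerThreshold P ℓ < x) : ℓ ≤ level P x := by
  cases ℓ with
  | zero => exact Nat.zero_le _
  | succ j => exact Nat.succ_le_of_lt <| not_le.mp fun hj =>
      h.not_ge ((level_le_iff hP hx (by omega)).mp hj)

lemma lowerThreshold_lt_of_le_level (hx : 0 < x) (h : ℓ ≤ level P x) :
    lowerThreshold P ℓ < x := by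
  cases ℓ with
  | zero => exact hx
  | succ j =>
    show P j < x
    exact not_le.mp fun hj => (level_le_of_le hj).not_gt h

lemma lowerThreshold_of_pos (hℓ : 0 < ℓ) : lowerThreshold P ℓ = P (ℓ - 1) := by
  obtain ⟨j, rfl⟩ := Nat.exists_eq_add_of_le' hℓ
  rfl

lemma lowerThreshold_nonneg (hP : MonotoneOn P (Set.Iic k)) (h0 : 0 ≤ P 0)
    (hℓ : ℓ ≤ k + 1) : 0 ≤ lowerThreshold P ℓ := by
  cases ℓ with
  | zero => exact le_rfl
  | succ j =>
    exact h0.trans (hP (Nat.zero_le k) (by simp only [Set.mem_Iic]; omega) (Nat.zero_le j))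

lemma lowerThreshold_le (hP : MonotoneOn P (Set.Iic k)) (h0 : 0 ≤ P 0) (hℓ : ℓ ≤ k) :
    lowerThreshold P ℓ ≤ P ℓ := by
  cases ℓ with
  | zero => exact h0
  | succ j => exact hP (by simp only [Set.mem_Iic]; omega) hℓ (Nat.le_succ j)

end Level

section MinLevel

variable {ι : Type*}

noncomputable def minLevel (P : ℕ → ℝ) (ω : ι → ℝ) : ℕ :=
  sInf (Set.range fun i => level P (ω i))

section

variable {P : ℕ → ℝ} {k : ℕ} {ω : ι → ℝ}

lemma minLevel_le_level (i : ι) : minLevel P ω ≤ level P (ω i) := Nat.sInf_le ⟨i, rfl⟩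

lemma minLevel_le (hω : ∀ i, ω i ≤ P k) : minLevel P ω ≤ k := by
  cases isEmpty_or_nonempty ι with
  | inl _ => rw [minLevel, Set.range_eq_empty, Nat.sInf_empty]; exact Nat.zero_le k
  | inr h => exact (minLevel_le_level h.some).trans (level_le_of_le (hω _))

end

variable [Fintype ι]

noncomputable def minLevelCount (P : ℕ → ℝ) (ω : ι → ℝ) : ℕ :=
  (Finset.univ.filter fun i => level P (ω i) = minLevel P ω).card

/-- For `m > 0`: the minimum level is `ℓ` and exactly `m` values attain it. -/
def levelEvent (P : ℕ → ℝ) (k m ℓ : ℕ) : Set (ι → ℝ) :=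
  {ω | (∀ i, ω i ∈ Set.Ioc (lowerThreshold P ℓ) (P k)) ∧
    (Finset.univ.filter fun i => ω i ∈ Set.Iic (P ℓ)).card = m}

variable {P : ℕ → ℝ} {k m ℓ : ℕ} {ω : ι → ℝ}

lemma minLevelCount_eq_card (hP : MonotoneOn P (Set.Iic k)) (hω : ∀ i, ω i ≤ P k) :
    minLevelCount P ω
      = (Finset.univ.filter fun i => ω i ∈ Set.Iic (P (minLevel P ω))).card := by
  refine congrArg Finset.card (Finset.filter_congr fun i _ => ?_)
  rw [Set.mem_Iic, ← level_le_iff hP (hω i) (minLevel_le hω), le_antisymm_iff,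
    and_iff_left (minLevel_le_level i)]

lemma minLevel_eq_of_mem_levelEvent (hP : MonotoneOn P (Set.Iic k)) (hℓ : ℓ ≤ k) (hm : 0 < m)
    (hω : ω ∈ levelEvent P k m ℓ) : minLevel P ω = ℓ := by
  obtain ⟨hbounds, hcard⟩ := hω
  obtain ⟨i, hi⟩ := Finset.card_pos.mp (hcard ▸ hm)
  refine le_antisymm
    ((minLevel_le_level i).trans (level_le_of_le (Finset.mem_filter.mp hi).2)) ?_
  refine le_csInf ⟨_, i, rfl⟩ ?_
  rintro _ ⟨j, rfl⟩
  exact le_level_of_lowerThreshold_lt hP (hbounds j).2 (by omega) (hbounds j).1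

lemma minLevelCount_eq_iff (hP : MonotoneOn P (Set.Iic k)) (hm : 0 < m)
    (hω : ∀ i, ω i ∈ Set.Ioc 0 (P k)) :
    minLevelCount P ω = m ↔ ∃ ℓ ≤ k, ω ∈ levelEvent P k m ℓ := by
  have hωk : ∀ i, ω i ≤ P k := fun i => (hω i).2
  rw [minLevelCount_eq_card hP hωk]
  constructor
  · intro h
    exact ⟨minLevel P ω, minLevel_le hωk,
      fun i => ⟨lowerThreshold_lt_of_le_level (hω i).1 (minLevel_le_level i), hωk i⟩, h⟩
  · rintro ⟨ℓ, hℓ, hmem⟩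
    rw [minLevel_eq_of_mem_levelEvent hP hℓ hm hmem]
    exact hmem.2

lemma pairwiseDisjoint_levelEvent (hP : MonotoneOn P (Set.Iic k)) (hm : 0 < m) :
    (Set.Iic k).PairwiseDisjoint (levelEvent (ι := ι) P k m) :=
  fun _ hℓ _ hℓ' hne => Set.disjoint_left.mpr fun _ h h' =>
    hne ((minLevel_eq_of_mem_levelEvent hP hℓ hm h).symm.trans
      (minLevel_eq_of_mem_levelEvent hP hℓ' hm h'))

end MinLevel

section Uniform

lemma volume_restrict_Icc_zero_one_Ioc {a b : ℝ} (ha : 0 ≤ a) (hb : b ≤ 1) :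
    volume.restrict (Set.Icc (0 : ℝ) 1) (Set.Ioc a b) = ENNReal.ofReal (b - a) := by
  rw [Measure.restrict_apply measurableSet_Ioc,
    Set.inter_eq_left.mpr (Set.Ioc_subset_Icc_self.trans (Set.Icc_subset_Icc ha hb)),
    Real.volume_Ioc]

lemma ae_forall_mem_Ioc_zero_one {ι : Type*} [Fintype ι] :
    ∀ᵐ ω ∂(Measure.pi fun _ : ι => volume.restrict (Set.Icc (0 : ℝ) 1)),
      ∀ i, ω i ∈ Set.Ioc 0 1 := by
  refine Measure.ae_pi_le_pi (Filter.eventually_pi fun _ => ?_)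
  rw [Measure.restrict_congr_set Ioc_ae_eq_Icc.symm]
  exact ae_restrict_mem measurableSet_Ioc

lemma measureReal_levelEvent {ι : Type*} [Fintype ι] {P : ℕ → ℝ} {k ℓ : ℕ}
    (hP : MonotoneOn P (Set.Iic k)) (h0 : 0 ≤ P 0) (hPk : P k = 1) (hℓ : ℓ ≤ k) (m : ℕ) :
    (Measure.pi fun _ : ι => volume.restrict (Set.Icc (0 : ℝ) 1)).real (levelEvent P k m ℓ)
      = (Fintype.card ι).choose m * (P ℓ - lowerThreshold P ℓ) ^ m
          * (1 - P ℓ) ^ (Fintype.card ι - m) := by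
  have hlow := lowerThreshold_nonneg hP h0 (by omega : ℓ ≤ k + 1)
  have hlowle := lowerThreshold_le hP h0 hℓ
  have hPℓ : P ℓ ≤ 1 := hPk ▸ hP hℓ (Set.mem_Iic.mpr le_rfl) hℓ
  rw [measureReal_def, levelEvent, measure_pi_setOf_card_filter_mem
      (volume.restrict (Set.Icc (0 : ℝ) 1)) measurableSet_Ioc measurableSet_Iic,
    Set.Ioc_inter_Iic, hPk, min_eq_right hPℓ, Set.Ioc_sdiff_Iic, max_eq_right hlowle,
    volume_restrict_Icc_zero_one_Ioc hlow hPℓ,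
    volume_restrict_Icc_zero_one_Ioc (hlow.trans hlowle) le_rfl]
  simp [ENNReal.toReal_ofReal, hlowle, hPℓ]

end Uniform

lemma choose_mul_pow_mul_zero_pow (n m : ℕ) (x : ℝ) :
    (n.choose m : ℝ) * x ^ m * 0 ^ (n - m) = if m = n then x ^ n else 0 := by
  rcases lt_trichotomy m n with h | rfl | h
  · simp [h.ne, Nat.sub_ne_zero_of_lt h]
  · simp
  · simp [h.ne', Nat.choose_eq_zero_of_lt h]

lemma sum_range_succ_eq_add_sum_Ioo_add {M : Type*} [AddCommMonoid M] (f : ℕ → M) {k : ℕ}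
    (hk : 1 ≤ k) :
    ∑ ℓ ∈ Finset.range (k + 1), f ℓ = f 0 + ∑ ℓ ∈ Finset.Ioo 0 k, f ℓ + f k := by
  rw [Finset.sum_range_succ, Finset.range_eq_Ico, Finset.sum_eq_sum_Ico_succ_bot hk,
    ← Finset.Ico_succ_left_eq_Ioo]
  rfl

theorem stmt10_general (n k : ℕ) (hk : 1 ≤ k)
    (P : ℕ → ℝ) (hP0 : 0 < P 0) (hmono : ∀ i, i < k → P i ≤ P (i + 1)) (hPk : P k = 1)
    (μ : Measure (Fin n → ℝ))
    (hμ : μ = Measure.pi fun _ : Fin n => volume.restrict (Set.Icc (0 : ℝ) 1))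
    (L : (Fin n → ℝ) → Fin n → ℕ)
    (hL : ∀ ω i, L ω i = sInf {ℓ : ℕ | ω i ≤ P ℓ})
    (M : (Fin n → ℝ) → ℕ)
    (hM : ∀ ω, M ω = (Finset.univ.filter fun i => L ω i = sInf (Set.range (L ω))).card)
    (m : ℕ) (hm : 0 < m) :
    (μ {ω | M ω = m}).toReal
      = (n.choose m : ℝ) * P 0 ^ m * (1 - P 0) ^ (n - m)
        + ∑ ℓ ∈ Finset.Ioo 0 k,
            (n.choose m : ℝ) * (P ℓ - P (ℓ - 1)) ^ m * (1 - P ℓ) ^ (n - m)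
        + (if m = n then (1 - P (k - 1)) ^ n else 0) := by
  have hP : MonotoneOn P (Set.Iic k) :=
    monotoneOn_of_le_succ Set.ordConnected_Iic fun i _ _ hi => hmono i (Order.succ_le_iff.mp hi)
  obtain rfl : L = fun ω i => level P (ω i) := funext fun ω => funext (hL ω)
  obtain rfl : M = minLevelCount P := funext hM
  have hevent :
      {ω | minLevelCount P ω = m} =ᵐ[μ] ⋃ ℓ ∈ Finset.range (k + 1), levelEvent P k m ℓ := by
    refine Filter.eventuallyEq_set.mpr ?_
    filter_upwards [hμ ▸ ae_forall_mem_Ioc_zero_one] with ω hω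
    rw [← hPk] at hω
    simpa [Nat.lt_succ_iff] using minLevelCount_eq_iff hP hm hω
  rw [← measureReal_def, measureReal_congr hevent, hμ, measureReal_biUnion_finset
      ((pairwiseDisjoint_levelEvent hP hm).subset fun _ hℓ => by
        simpa [Nat.lt_succ_iff] using hℓ)
      fun ℓ _ => measurableSet_setOf_card_filter_mem measurableSet_Ioc measurableSet_Iic m,
    Finset.sum_congr rfl fun ℓ hℓ => measureReal_levelEvent hP hP0.le hPk
      (Nat.lt_succ_iff.mp (Finset.mem_range.mp hℓ)) m]
  rw [Fintype.card_fin, sum_range_succ_eq_add_sum_Ioo_add _ hk,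
    Finset.sum_congr rfl fun ℓ hℓ => by rw [lowerThreshold_of_pos (Finset.mem_Ioo.mp hℓ).1],
    lowerThreshold_of_pos hk, hPk, sub_self, choose_mul_pow_mul_zero_pow]
  simp [lowerThreshold]

/-- Implicit empty block scheme: `n` i.i.d. uniform hash values on `[0,1]`,
level `L_i = min{ℓ : X_i ≤ P_ℓ}`, and `M_n` counts the indices achieving the
minimum level.  Distribution of `M_n` for `m > 0`. -/
theorem stmt10 (n k : ℕ) (hn : 1 ≤ n) (hk : 1 ≤ k)
    (P : ℕ → ℝ) (hP0 : 0 < P 0) (hmono : ∀ i, i < k → P i ≤ P (i + 1)) (hPk : P k = 1)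
    (μ : Measure (Fin n → ℝ))
    (hμ : μ = Measure.pi fun _ : Fin n => volume.restrict (Set.Icc (0 : ℝ) 1))
    (L : (Fin n → ℝ) → Fin n → ℕ)
    (hL : ∀ ω i, L ω i = sInf {ℓ : ℕ | ω i ≤ P ℓ})
    (M : (Fin n → ℝ) → ℕ)
    (hM : ∀ ω, M ω = (Finset.univ.filter fun i => L ω i = sInf (Set.range (L ω))).card)
    (m : ℕ) (hm : 0 < m) :
    (μ {ω | M ω = m}).toReal
      = (n.choose m : ℝ) * P 0 ^ m * (1 - P 0) ^ (n - m)
        + ∑ ℓ ∈ Finset.Ioo 0 k,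
            (n.choose m : ℝ) * (P ℓ - P (ℓ - 1)) ^ m * (1 - P ℓ) ^ (n - m)
        + (if m = n then (1 - P (k - 1)) ^ n else 0) :=
  stmt10_general n k hk P hP0 hmono hPk μ hμ L hL M hM m hm
end

section
/- Let $n \geq 1$, $k \geq 1$, and $0 = P_{-1} < P_0 \leq \cdots \leq P_k = 1$. Let $X_1,\ldots,X_n$ be i.i.d. uniform on $[0,1]$, $L_i = \min\{\ell : X_i \leq P_\ell\}$, and $M_n$ the number of $i$ with $L_i = \min_j L_j$. Then $E[M_n] = n P_0 + \sum_{\ell=1}^{k} n (P_\ell - P_{\ell-1})(1-P_{\ell-1})^{n-1}$. -/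
open MeasureTheory Set
open scoped Classical

/-!
Competitor `i` wins iff, for some `ℓ`, `X_i` lies in slot `ℓ` and every `X_j` lies in slot `ℓ` or
above. These events are disjoint in `ℓ` and each is a product event, so
`Pr(i wins) = ∑ ℓ, Pr(L = ℓ) * Pr(L ≥ ℓ)^(n-1)`. For uniform `X` the two factors are
`P_ℓ - P_{ℓ-1}` and `1 - P_{ℓ-1}` (and `P_0`, `1` for `ℓ = 0`); linearity of expectation then
multiplies by `n`.
-/

theorem measurable_sInf_setOf_nat {α : Type*} [MeasurableSpace α] {p : ℕ → α → Prop}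
    (hp : ∀ ℓ, MeasurableSet {x | p ℓ x}) : Measurable fun x => sInf {ℓ | p ℓ x} := by
  have hq : ∀ x, ∃ ℓ, p ℓ x ∨ ∀ j, ¬ p j x := fun x =>
    (em (∃ j, p j x)).elim (fun ⟨j, hj⟩ => ⟨j, .inl hj⟩) fun h => ⟨0, .inr (not_exists.1 h)⟩
  -- `sInf ∅ = 0` agrees with `Nat.find` of the predicate extended to hold at `0` when it never holds
  have heq : ∀ x, sInf {ℓ | p ℓ x} = Nat.find (hq x) := fun x => by
    by_cases h : ∃ j, p j x
    · rw [Nat.sInf_def (s := {ℓ | p ℓ x}) h]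
      congr! 2 with ℓ
      simp [h]
    · rw [show {ℓ | p ℓ x} = ∅ from eq_empty_of_forall_notMem (not_exists.1 h), Nat.sInf_empty]
      exact ((Nat.find_eq_zero (hq x)).2 (.inr (not_exists.1 h))).symm
  simp_rw [heq]
  have hp' : ∀ ℓ, Measurable (p ℓ) := fun ℓ => measurableSet_setOfPred.1 (hp ℓ)
  exact measurable_find hq fun ℓ =>
    measurableSet_setOfPred.2 ((hp' ℓ).or (.forall fun j => (hp' j).not))

theorem integral_card_filter {Ω ι : Type*} [MeasurableSpace Ω] [Fintype ι] (μ : Measure Ω)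
    [IsFiniteMeasure μ] {p : ι → Ω → Prop} [∀ i ω, Decidable (p i ω)]
    (hp : ∀ i, MeasurableSet {ω | p i ω}) :
    ∫ ω, ((Finset.univ.filter fun i => p i ω).card : ℝ) ∂μ = ∑ i, μ.real {ω | p i ω} := by
  have hind : ∀ i ω, (if p i ω then (1 : ℝ) else 0) = {ω | p i ω}.indicator 1 ω := fun i ω => by
    simp [indicator_apply]
  simp_rw [Finset.natCast_card_filter, hind]
  rw [integral_finsetSum _ fun i _ => (integrable_const 1).indicator (hp i)]
  exact Finset.sum_congr rfl fun i _ => integral_indicator_one (hp i)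

theorem Fintype.prod_ite_eq_mul_pow {ι M : Type*} [Fintype ι] [DecidableEq ι] [CommMonoid M]
    (i : ι) (a b : M) : ∏ j, (if j = i then a else b) = a * b ^ (Fintype.card ι - 1) := by
  rw [Fintype.prod_eq_mul_prod_compl i, if_pos rfl,
    Finset.prod_congr rfl fun j hj => if_neg (Finset.notMem_singleton.1 (Finset.mem_compl.1 hj)),
    Finset.prod_const, Finset.card_compl, Finset.card_singleton]

section ArgMin

variable {ι α : Type*} [DecidableEq ι]

theorem setOf_apply_eq_iInf_eq_iUnion (f : α → ℕ) (i : ι) :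
    {ω : ι → α | f (ω i) = ⨅ j, f (ω j)} =
      ⋃ ℓ, univ.pi fun j => if j = i then f ⁻¹' {ℓ} else f ⁻¹' Ici ℓ := by
  ext ω
  simp only [mem_ofPred_eq, mem_iUnion, mem_univ_pi]
  constructor
  · intro h
    refine ⟨f (ω i), fun j => ?_⟩
    split_ifs with hj
    · simp [hj]
    · exact h.le.trans (ciInf_le (OrderBot.bddBelow _) j)
  · rintro ⟨ℓ, hω⟩
    have hi : f (ω i) = ℓ := by simpa using hω i
    have : Nonempty ι := ⟨i⟩
    refine le_antisymm (le_ciInf fun j => ?_) (ciInf_le (OrderBot.bddBelow _) i)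
    by_cases hj : j = i
    · rw [hj]
    · simpa [hj, hi] using hω j

variable [MeasurableSpace α] {f : α → ℕ}

theorem measurableSet_setOf_apply_eq_iInf [Countable ι] (hf : Measurable f) (i : ι) :
    MeasurableSet {ω : ι → α | f (ω i) = ⨅ j, f (ω j)} := by
  rw [setOf_apply_eq_iInf_eq_iUnion]
  exact .iUnion fun ℓ => .univ_pi fun j => by split_ifs <;> exact hf .of_discrete

theorem pi_setOf_apply_eq_iInf [Fintype ι] (ν : Measure α) [SigmaFinite ν] (hf : Measurable f)
    (i : ι) :
    Measure.pi (fun _ : ι => ν) {ω | f (ω i) = ⨅ j, f (ω j)} =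
      ∑' ℓ, ν (f ⁻¹' {ℓ}) * ν (f ⁻¹' Ici ℓ) ^ (Fintype.card ι - 1) := by
  rw [setOf_apply_eq_iInf_eq_iUnion]
  refine (measure_iUnion (fun ℓ m hℓm => ?_) fun ℓ => ?_).trans ?_
  · refine disjoint_left.2 fun ω hℓ hm => hℓm ?_
    have hℓ := hℓ i trivial
    have hm := hm i trivial
    simp only [↓reduceIte] at hℓ hm
    exact hℓ.symm.trans hm
  · exact .univ_pi fun j => by split_ifs <;> exact hf .of_discrete
  · simp_rw [Measure.pi_pi, apply_ite, Fintype.prod_ite_eq_mul_pow]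

end ArgMin

-- `L_i = slot P X_i`; when `x > P ℓ` for all `ℓ` the slot is the junk value `sInf ∅ = 0`.
noncomputable def slot (P : ℕ → ℝ) (x : ℝ) : ℕ := sInf {ℓ | x ≤ P ℓ}

theorem measurable_slot (P : ℕ → ℝ) : Measurable (slot P) :=
  measurable_sInf_setOf_nat fun _ => measurableSet_Iic

instance : IsProbabilityMeasure (volume.restrict (Icc (0 : ℝ) 1)) := ⟨by simp⟩

section Slot

variable {P : ℕ → ℝ} {k ℓ : ℕ} {x : ℝ}

theorem slot_le_iff (hP : MonotoneOn P (Iic k)) (hx : x ≤ P k) (hℓ : ℓ ≤ k) :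
    slot P x ≤ ℓ ↔ x ≤ P ℓ := by
  have hk : k ∈ {ℓ | x ≤ P ℓ} := hx
  refine ⟨fun h => ?_, fun h => Nat.sInf_le h⟩
  exact (Nat.sInf_mem ⟨k, hk⟩ : x ≤ P (slot P x)).trans (hP (Nat.sInf_le hk) hℓ h)

theorem slot_le_of_le (hx : x ≤ P k) : slot P x ≤ k := Nat.sInf_le hx

theorem nonneg_of_monotoneOn (hP0 : 0 ≤ P 0) (hP : MonotoneOn P (Iic k)) (hℓ : ℓ ≤ k) :
    0 ≤ P ℓ :=
  hP0.trans (hP (Nat.zero_le k) hℓ (Nat.zero_le ℓ))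

theorem le_one_of_monotoneOn (hP : MonotoneOn P (Iic k)) (hPk : P k = 1) (hℓ : ℓ ≤ k) :
    P ℓ ≤ 1 :=
  hPk ▸ hP hℓ (le_refl k) hℓ

theorem preimage_slot_zero_inter (hP : MonotoneOn P (Iic k)) (hPk : P k = 1) :
    slot P ⁻¹' {0} ∩ Icc 0 1 = Icc 0 (P 0) := by
  ext x
  simp only [mem_inter_iff, mem_preimage, mem_singleton_iff, mem_Icc]
  constructor
  · rintro ⟨h, hx0, hx1⟩
    exact ⟨hx0, (slot_le_iff hP (hPk ▸ hx1) (Nat.zero_le k)).1 h.le⟩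
  · rintro ⟨hx0, hx⟩
    have hx1 := hx.trans (le_one_of_monotoneOn hP hPk (Nat.zero_le k))
    exact ⟨Nat.le_zero.1 ((slot_le_iff hP (hPk ▸ hx1) (Nat.zero_le k)).2 hx), hx0, hx1⟩

theorem preimage_slot_inter (hP0 : 0 ≤ P 0) (hP : MonotoneOn P (Iic k)) (hPk : P k = 1)
    (hℓ : 1 ≤ ℓ) (hℓk : ℓ ≤ k) :
    slot P ⁻¹' {ℓ} ∩ Icc 0 1 = Ioc (P (ℓ - 1)) (P ℓ) := by
  ext x
  simp only [mem_inter_iff, mem_preimage, mem_singleton_iff, mem_Icc, mem_Ioc]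
  constructor
  · rintro ⟨h, -, hx1⟩
    rw [← slot_le_iff hP (hPk ▸ hx1) hℓk, ← not_le, ← slot_le_iff hP (hPk ▸ hx1) (by omega)]
    omega
  · rintro ⟨hlt, hx⟩
    have hx1 := hx.trans (le_one_of_monotoneOn hP hPk hℓk)
    have hle := (slot_le_iff hP (hPk ▸ hx1) hℓk).2 hx
    have hgt := mt (slot_le_iff hP (hPk ▸ hx1) (ℓ := ℓ - 1) (by omega)).1 (not_le.2 hlt)
    exact ⟨by omega, (nonneg_of_monotoneOn hP0 hP (by omega)).trans hlt.le, hx1⟩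

theorem preimage_Ici_slot_inter (hP0 : 0 ≤ P 0) (hP : MonotoneOn P (Iic k)) (hPk : P k = 1)
    (hℓ : 1 ≤ ℓ) (hℓk : ℓ ≤ k) :
    slot P ⁻¹' Ici ℓ ∩ Icc 0 1 = Ioc (P (ℓ - 1)) 1 := by
  ext x
  simp only [mem_inter_iff, mem_preimage, mem_Ici, mem_Icc, mem_Ioc]
  constructor
  · rintro ⟨h, -, hx1⟩
    refine ⟨?_, hx1⟩
    rw [← not_le, ← slot_le_iff hP (hPk ▸ hx1) (by omega)]
    omega
  · rintro ⟨hlt, hx1⟩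
    have hgt := mt (slot_le_iff hP (hPk ▸ hx1) (ℓ := ℓ - 1) (by omega)).1 (not_le.2 hlt)
    exact ⟨by omega, (nonneg_of_monotoneOn hP0 hP (by omega)).trans hlt.le, hx1⟩

theorem preimage_slot_inter_eq_empty (hPk : P k = 1) (hkℓ : k < ℓ) :
    slot P ⁻¹' {ℓ} ∩ Icc 0 1 = ∅ := by
  refine eq_empty_of_forall_notMem fun x ⟨h, hx⟩ => ?_
  have := slot_le_of_le (P := P) (hPk ▸ hx.2)
  simp only [mem_preimage, mem_singleton_iff] at h
  omega

theorem measureReal_pi_slot_eq_iInf {ι : Type*} [Fintype ι] [DecidableEq ι] (hP0 : 0 ≤ P 0)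
    (hP : MonotoneOn P (Iic k)) (hPk : P k = 1) (i : ι) :
    (Measure.pi fun _ : ι => volume.restrict (Icc (0 : ℝ) 1)).real
        {ω | slot P (ω i) = ⨅ j, slot P (ω j)} =
      P 0 + ∑ ℓ ∈ Finset.Icc 1 k,
        (P ℓ - P (ℓ - 1)) * (1 - P (ℓ - 1)) ^ (Fintype.card ι - 1) := by
  set ν := volume.restrict (Icc (0 : ℝ) 1)
  have hν : ∀ s : Set ℕ, ν.real (slot P ⁻¹' s) = volume.real (slot P ⁻¹' s ∩ Icc 0 1) :=
    fun s => measureReal_restrict_apply (measurable_slot P .of_discrete)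
  have hvanish : ∀ ℓ ∉ Finset.range (k + 1),
      ν (slot P ⁻¹' {ℓ}) * ν (slot P ⁻¹' Ici ℓ) ^ (Fintype.card ι - 1) = 0 := fun ℓ hℓ => by
    rw [Measure.restrict_apply (measurable_slot P .of_discrete),
      preimage_slot_inter_eq_empty hPk (by simpa using hℓ), measure_empty, zero_mul]
  have hrange : Finset.range (k + 1) = insert 0 (Finset.Icc 1 k) := by
    ext
    simp only [Finset.mem_range, Finset.mem_insert, Finset.mem_Icc]
    omega
  rw [measureReal_def, pi_setOf_apply_eq_iInf ν (measurable_slot P) i, tsum_eq_sum hvanish,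
    ENNReal.toReal_sum fun _ _ => by finiteness]
  simp only [ENNReal.toReal_mul, ENNReal.toReal_pow, ← measureReal_def]
  rw [hrange, Finset.sum_insert (by simp), Ici_zero_eq_univ, preimage_univ, probReal_univ,
    one_pow, mul_one, hν, preimage_slot_zero_inter hP hPk, Real.volume_real_Icc_of_le hP0, sub_zero]
  refine congrArg (P 0 + ·) (Finset.sum_congr rfl fun ℓ hℓ => ?_)
  obtain ⟨hℓ1, hℓk⟩ := Finset.mem_Icc.1 hℓ
  rw [hν, hν, preimage_slot_inter hP0 hP hPk hℓ1 hℓk, preimage_Ici_slot_inter hP0 hP hPk hℓ1 hℓk,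
    Real.volume_real_Ioc_of_le (hP (mem_Iic.2 (by omega)) hℓk (Nat.sub_le ℓ 1)),
    Real.volume_real_Ioc_of_le (le_one_of_monotoneOn hP hPk (by omega))]

end Slot

theorem stmt11_general (n k : ℕ)
    (P : ℕ → ℝ) (hP0 : 0 < P 0) (hmono : ∀ i, i < k → P i ≤ P (i + 1)) (hPk : P k = 1)
    (μ : Measure (Fin n → ℝ))
    (hμ : μ = Measure.pi fun _ : Fin n => volume.restrict (Set.Icc (0 : ℝ) 1))
    (L : (Fin n → ℝ) → Fin n → ℕ)
    (hL : ∀ ω i, L ω i = sInf {ℓ : ℕ | ω i ≤ P ℓ})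
    (M : (Fin n → ℝ) → ℕ)
    (hM : ∀ ω, M ω = (Finset.univ.filter fun i => L ω i = sInf (Set.range (L ω))).card) :
    ∫ ω, (M ω : ℝ) ∂μ
      = (n : ℝ) * P 0 + ∑ ℓ ∈ Finset.Icc 1 k,
          (n : ℝ) * (P ℓ - P (ℓ - 1)) * (1 - P (ℓ - 1)) ^ (n - 1) := by
  have hP : MonotoneOn P (Iic k) :=
    monotoneOn_of_le_add_one ordConnected_Iic fun a _ _ ha => hmono a ha
  obtain rfl : L = fun ω j => slot P (ω j) := funext fun ω => funext (hL ω)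
  obtain rfl : M = fun ω => (Finset.univ.filter fun i =>
      slot P (ω i) = ⨅ j, slot P (ω j)).card := funext hM
  subst hμ
  rw [integral_card_filter _ fun i => measurableSet_setOf_apply_eq_iInf (measurable_slot P) i]
  simp_rw [measureReal_pi_slot_eq_iInf hP0.le hP hPk, Fintype.card_fin]
  rw [Finset.sum_const, Finset.card_univ, Fintype.card_fin, nsmul_eq_mul, mul_add, Finset.mul_sum]
  simp_rw [mul_assoc]

/-- Expected number of winners in the implicit empty block scheme:
`E[M_n] = n P_0 + ∑_{ℓ=1}^k n (P_ℓ - P_{ℓ-1})(1-P_{ℓ-1})^{n-1}`. -/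
theorem stmt11 (n k : ℕ) (hn : 1 ≤ n) (hk : 1 ≤ k)
    (P : ℕ → ℝ) (hP0 : 0 < P 0) (hmono : ∀ i, i < k → P i ≤ P (i + 1)) (hPk : P k = 1)
    (μ : Measure (Fin n → ℝ))
    (hμ : μ = Measure.pi fun _ : Fin n => volume.restrict (Set.Icc (0 : ℝ) 1))
    (L : (Fin n → ℝ) → Fin n → ℕ)
    (hL : ∀ ω i, L ω i = sInf {ℓ : ℕ | ω i ≤ P ℓ})
    (M : (Fin n → ℝ) → ℕ)
    (hM : ∀ ω, M ω = (Finset.univ.filter fun i => L ω i = sInf (Set.range (L ω))).card) :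
    ∫ ω, (M ω : ℝ) ∂μ
      = (n : ℝ) * P 0 + ∑ ℓ ∈ Finset.Icc 1 k,
          (n : ℝ) * (P ℓ - P (ℓ - 1)) * (1 - P (ℓ - 1)) ^ (n - 1) :=
  stmt11_general n k P hP0 hmono hPk μ hμ L hL M hM
end

section
/- Let $N \geq 2$, $k \geq 1$, $p = N^{-1/k}$, $P_\ell = p^{k-\ell}$. For $1 \leq n \leq N$, the quantity $E[M_n] = nP_0 + \sum_{\ell=1}^k n(P_\ell - P_{\ell-1})(1-P_{\ell-1})^{n-1}$ (expected number of winners in the implicit empty block scheme) satisfies $E[M_n] = O(N^{1/k})$; more precisely there is an absolute function $C(p)$ with $E[M_n] \leq \frac{n}{N} + \frac{1}{p(1-p)}\sum_{\ell=1}^k n P_\ell (1-P_{\ell-1})^n$ and the latter sum is $O(N^{1/k})$. -/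
/-!
With `x = P_{ℓ-1} = p P_ℓ`, each summand of `E[M_n]` equals `(1 - p) n P_ℓ (1 - x)^(n-1)`, and
`(1 - p) p (1 - p) ≤ 1 - p ≤ 1 - x` turns it into the corresponding summand of the bound; the
leading term is `n p^k = n / N`. For the second claim,
`n x (1 - x)^n ≤ (1 + n x)(1 - x)^n ≤ (1 - x²)^n ≤ 1` (Bernoulli) bounds each of the `k`
summands `n P_ℓ (1 - P_{ℓ-1})^n` by `1 / p = N^{1/k}`.
-/

open Finset

lemma natCast_mul_mul_one_sub_pow_le_one {x : ℝ} (hx0 : 0 ≤ x) (hx1 : x ≤ 1) (n : ℕ) :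
    (n : ℝ) * x * (1 - x) ^ n ≤ 1 := by
  have hbernoulli : 1 + (n : ℝ) * x ≤ (1 + x) ^ n := one_add_mul_le_pow (by linarith) n
  have hpow_nonneg : (0 : ℝ) ≤ (1 - x) ^ n := pow_nonneg (by linarith) n
  have hsq : (1 - x) ^ n * (1 + x) ^ n ≤ 1 := by
    rw [← mul_pow]
    exact pow_le_one₀ (by nlinarith) (by nlinarith)
  nlinarith [mul_le_mul_of_nonneg_right hbernoulli hpow_nonneg]

lemma pow_sub_pred_eq_mul_pow_sub {M : Type*} [Monoid M] (p : M) {k ℓ : ℕ}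
    (hℓ : 1 ≤ ℓ) (hℓk : ℓ ≤ k) :
    p ^ (k - (ℓ - 1)) = p * p ^ (k - ℓ) := by
  rw [show k - (ℓ - 1) = k - ℓ + 1 by omega, pow_succ']

lemma natCast_mul_sub_mul_pow_pred_le {p q : ℝ} (hp0 : 0 < p) (hp1 : p < 1)
    (hq0 : 0 ≤ q) (hq1 : q ≤ 1) {n : ℕ} (hn : 1 ≤ n) :
    (n : ℝ) * (q - p * q) * (1 - p * q) ^ (n - 1)
      ≤ 1 / (p * (1 - p)) * ((n : ℝ) * q * (1 - p * q) ^ n) := by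
  have hB : 0 ≤ (n : ℝ) * q * (1 - p * q) ^ (n - 1) :=
    mul_nonneg (by positivity) (pow_nonneg (by nlinarith) _)
  have hfactor : 1 - p ≤ (1 - p * q) / (p * (1 - p)) := by
    have hpq : p * q ≤ p := mul_le_of_le_one_right hp0.le hq1
    have hvar : p * (1 - p) ≤ 1 := by nlinarith
    rw [le_div_iff₀ (mul_pos hp0 (by linarith))]
    nlinarith [mul_le_mul_of_nonneg_left hvar (by linarith : (0 : ℝ) ≤ 1 - p)]
  calc (n : ℝ) * (q - p * q) * (1 - p * q) ^ (n - 1)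
      = (1 - p) * ((n : ℝ) * q * (1 - p * q) ^ (n - 1)) := by ring
    _ ≤ (1 - p * q) / (p * (1 - p)) * ((n : ℝ) * q * (1 - p * q) ^ (n - 1)) :=
        mul_le_mul_of_nonneg_right hfactor hB
    _ = 1 / (p * (1 - p)) * ((n : ℝ) * q * (1 - p * q) ^ n) := by
        rw [← pow_sub_one_mul (by omega : n ≠ 0)]
        ring

section GeometricLevels

variable {p : ℝ} {k : ℕ} {P : ℕ → ℝ}

lemma expected_winners_le (hp0 : 0 < p) (hp1 : p < 1) (hP : ∀ ℓ, P ℓ = p ^ (k - ℓ))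
    {n : ℕ} (hn : 1 ≤ n) :
    (n : ℝ) * P 0 +
        ∑ ℓ ∈ Icc 1 k, (n : ℝ) * (P ℓ - P (ℓ - 1)) * (1 - P (ℓ - 1)) ^ (n - 1)
      ≤ (n : ℝ) * p ^ k + 1 / (p * (1 - p)) *
          ∑ ℓ ∈ Icc 1 k, (n : ℝ) * P ℓ * (1 - P (ℓ - 1)) ^ n := by
  rw [hP 0, Nat.sub_zero, mul_sum]
  refine add_le_add le_rfl (sum_le_sum fun ℓ hℓ => ?_)
  obtain ⟨hℓ1, hℓk⟩ := mem_Icc.mp hℓ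
  rw [hP, hP, pow_sub_pred_eq_mul_pow_sub p hℓ1 hℓk]
  exact natCast_mul_sub_mul_pow_pred_le hp0 hp1 (by positivity)
    (pow_le_one₀ hp0.le hp1.le) hn

lemma sum_natCast_mul_mul_one_sub_pow_le (hp0 : 0 < p) (hp1 : p ≤ 1)
    (hP : ∀ ℓ, P ℓ = p ^ (k - ℓ)) (n : ℕ) :
    ∑ ℓ ∈ Icc 1 k, (n : ℝ) * P ℓ * (1 - P (ℓ - 1)) ^ n ≤ k * p⁻¹ := by
  calc ∑ ℓ ∈ Icc 1 k, (n : ℝ) * P ℓ * (1 - P (ℓ - 1)) ^ n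
      ≤ ∑ _ℓ ∈ Icc 1 k, p⁻¹ := by
        refine sum_le_sum fun ℓ hℓ => ?_
        obtain ⟨hℓ1, hℓk⟩ := mem_Icc.mp hℓ
        rw [hP, hP, pow_sub_pred_eq_mul_pow_sub p hℓ1 hℓk, ← pow_succ', inv_eq_one_div,
          le_div_iff₀ hp0]
        calc (n : ℝ) * p ^ (k - ℓ) * (1 - p ^ (k - ℓ + 1)) ^ n * p
            = (n : ℝ) * p ^ (k - ℓ + 1) * (1 - p ^ (k - ℓ + 1)) ^ n := by ring
          _ ≤ 1 :=
            natCast_mul_mul_one_sub_pow_le_one (by positivity) (pow_le_one₀ hp0.le hp1) n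
    _ = k * p⁻¹ := by simp

end GeometricLevels

/-- Scalability of the implicit empty block scheme: with `p = N^{-1/k}` and
`P_ℓ = p^{k-ℓ}`, the expected number of winners satisfies
`E[M_n] ≤ n/N + (1/(p(1-p))) ∑_{ℓ=1}^k n P_ℓ (1-P_{ℓ-1})^n`, and the latter
sum is `O(N^{1/k})`. -/
theorem stmt12 (k : ℕ) (hk : 1 ≤ k) :
    ∃ C : ℝ, ∀ N : ℕ, 2 ≤ N →
      ∀ p : ℝ, p = (N : ℝ) ^ (-(1 : ℝ) / (k : ℝ)) →
      ∀ P : ℕ → ℝ, (∀ ℓ, P ℓ = p ^ (k - ℓ)) →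
      ∀ n : ℕ, 1 ≤ n → n ≤ N →
        ((n : ℝ) * P 0 + ∑ ℓ ∈ Finset.Icc 1 k,
            (n : ℝ) * (P ℓ - P (ℓ - 1)) * (1 - P (ℓ - 1)) ^ (n - 1)
          ≤ (n : ℝ) / N + (1 / (p * (1 - p))) *
              ∑ ℓ ∈ Finset.Icc 1 k, (n : ℝ) * P ℓ * (1 - P (ℓ - 1)) ^ n) ∧
        ∑ ℓ ∈ Finset.Icc 1 k, (n : ℝ) * P ℓ * (1 - P (ℓ - 1)) ^ n
          ≤ C * (N : ℝ) ^ ((1 : ℝ) / (k : ℝ)) := by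
  refine ⟨k, fun N hN p hp P hP n hn _ => ?_⟩
  set r := (N : ℝ) ^ ((1 : ℝ) / k)
  have hN : (1 : ℝ) < N := by exact_mod_cast hN
  have hr : 1 < r := Real.one_lt_rpow hN (by positivity)
  have hpr : p = r⁻¹ := by rw [hp, neg_div, Real.rpow_neg (by positivity)]
  have hrk : r ^ k = N := by
    simp only [r, one_div]; exact Real.rpow_inv_natCast_pow (by positivity) (by omega)
  have hp0 : 0 < p := by rw [hpr]; positivity
  have hp1 : p < 1 := by rw [hpr]; exact inv_lt_one_of_one_lt₀ hr
  refine ⟨?_, ?_⟩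
  · have hpk : (n : ℝ) * p ^ k = n / N := by rw [hpr, inv_pow, hrk, div_eq_mul_inv]
    exact hpk ▸ expected_winners_le hp0 hp1 hP hn
  · simpa [hpr] using sum_natCast_mul_mul_one_sub_pow_le hp0 hp1.le hP n
end

section
/- Let $n, m \geq 1$, $k \geq 1$, and $0 < P_0 \leq \cdots \leq P_k = 1$. Two players $A$ (with $m$ independent uniform hash draws per call) and $B$ (with $n$ draws) compete: at slot $\ell$, $A$ succeeds with probability $1-(1-P_\ell)^m$ and $B$ with probability $1-(1-P_\ell)^n$, independently, with all calls independent across slots; $A$ wins if it succeeds at a strictly earlier slot than $B$, and ties at the same slot are broken by a fair coin. Then the probability $L_{m,n}$ that $A$ loses satisfies $L_{m,n} = \frac{1}{2}\sum_{\ell=0}^{k} (1-(1-P_\ell)^n)(1+(1-P_\ell)^m) \prod_{i<\ell}(1-P_i)^{n+m}$. -/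
/-!
A player with `N` uniform draws per slot survives slot `j` with probability `(1 - P j) ^ N`,
so its first success time `T` exceeds `ℓ` exactly on a cylinder event of probability
`∏_{j ≤ ℓ} (1 - P j) ^ N`, and `T = ℓ` with probability
`∏_{j < ℓ} (1 - P j) ^ N · (1 - (1 - P ℓ) ^ N)`.
Since `P k = 1`, never succeeding is a null event, so the junk value of `sInf ∅` is invisible.
The two players are independent, so splitting `{T_B < T_A}` and `{T_A = T_B}` according to the
value of `T_B` gives a sum over `ℓ` whose terms combine into the claimed summand.
-/

open MeasureTheory

namespace FirstHit

variable {β : Type*} {k : ℕ}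

def hitTimes (k : ℕ) (S : ℕ → Set β) (x : Fin (k + 1) → β) : Set ℕ :=
  {ℓ | ∃ h : ℓ < k + 1, x ⟨ℓ, h⟩ ∈ S ℓ}

/-- When no trial hits, this is `0`, the junk value of `sInf ∅`. -/
noncomputable def firstHit (k : ℕ) (S : ℕ → Set β) (x : Fin (k + 1) → β) : ℕ :=
  sInf (hitTimes k S x)

def noHitBefore (k : ℕ) (S : ℕ → Set β) (ℓ : ℕ) : Set (Fin (k + 1) → β) :=
  {x | ∀ j : Fin (k + 1), (j : ℕ) < ℓ → x j ∉ S j}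

variable {S : ℕ → Set β} {x : Fin (k + 1) → β} {ℓ : ℕ}

lemma hitTimes_eq_empty_iff : hitTimes k S x = ∅ ↔ ∀ j : Fin (k + 1), x j ∉ S j :=
  ⟨fun h j hj => h.subset ⟨j.isLt, hj⟩,
    fun h => Set.eq_empty_of_forall_notMem fun i ⟨hi, hxi⟩ => h ⟨i, hi⟩ hxi⟩

lemma firstHit_le (S : ℕ → Set β) (x : Fin (k + 1) → β) : firstHit k S x ≤ k := by
  rcases (hitTimes k S x).eq_empty_or_nonempty with h | h
  · rw [firstHit, h, Nat.sInf_empty]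
    exact k.zero_le
  · exact Nat.lt_succ_iff.mp (Nat.sInf_mem h).1

lemma mem_noHitBefore_iff_le_firstHit (hx : ∃ j : Fin (k + 1), x j ∈ S j) :
    x ∈ noHitBefore k S ℓ ↔ ℓ ≤ firstHit k S x := by
  obtain ⟨j, hj⟩ := hx
  rw [firstHit, le_csInf_iff' (s := hitTimes k S x) ⟨j, j.isLt, hj⟩]
  constructor
  · rintro hx i ⟨hi, hxi⟩
    by_contra! hiℓ
    exact hx ⟨i, hi⟩ hiℓ hxi
  · intro hx i hiℓ hxi
    exact (hx ⟨i.isLt, hxi⟩).not_gt hiℓ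

lemma lt_firstHit_iff :
    ℓ < firstHit k S x ↔ (∃ j : Fin (k + 1), x j ∈ S j) ∧ x ∈ noHitBefore k S (ℓ + 1) := by
  constructor
  · intro h
    have hx : ∃ j : Fin (k + 1), x j ∈ S j := by
      by_contra! hx
      rw [firstHit, hitTimes_eq_empty_iff.2 hx, Nat.sInf_empty] at h
      exact Nat.not_lt_zero _ h
    exact ⟨hx, (mem_noHitBefore_iff_le_firstHit hx).2 h⟩
  · rintro ⟨hx, h⟩
    exact (mem_noHitBefore_iff_le_firstHit hx).1 h

lemma firstHit_eq_iff (hx : ∃ j : Fin (k + 1), x j ∈ S j) (hℓ : ℓ < k + 1) :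
    firstHit k S x = ℓ ↔ x ⟨ℓ, hℓ⟩ ∈ S ℓ ∧ x ∈ noHitBefore k S ℓ := by
  rw [mem_noHitBefore_iff_le_firstHit hx]
  constructor
  · rintro rfl
    obtain ⟨j, hj⟩ := hx
    exact ⟨(Nat.sInf_mem (s := hitTimes k S x) ⟨j, j.isLt, hj⟩).2, le_rfl⟩
  · rintro ⟨hxℓ, hle⟩
    exact le_antisymm (Nat.sInf_le ⟨hℓ, hxℓ⟩) hle

variable [MeasurableSpace β]

lemma measurableSet_noHitBefore (hS : ∀ ℓ, MeasurableSet (S ℓ)) (ℓ : ℕ) :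
    MeasurableSet (noHitBefore k S ℓ) := by
  simp only [noHitBefore, Set.ofPred_forall]
  exact .iInter fun j => .iInter fun _ => (hS j).compl.preimage (measurable_pi_apply j)

lemma measurable_firstHit (hS : ∀ ℓ, MeasurableSet (S ℓ)) : Measurable (firstHit k S) := by
  refine measurable_of_Ioi fun ℓ => ?_
  have hpre : firstHit k S ⁻¹' Set.Ioi ℓ
      = (⋃ j : Fin (k + 1), {x | x j ∈ S j}) ∩ noHitBefore k S (ℓ + 1) := by
    ext x
    simp only [Set.mem_preimage, Set.mem_Ioi, lt_firstHit_iff, Set.mem_inter_iff, Set.mem_iUnion,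
      Set.mem_ofPred_eq]
  rw [hpre]
  refine .inter (.iUnion fun j => ?_) (measurableSet_noHitBefore hS _)
  exact (hS j).preimage (measurable_pi_apply j)

variable (κ : Measure β) [IsProbabilityMeasure κ]

lemma pi_noHitBefore_inter (hℓ : ℓ < k + 1) (T : Set β) :
    Measure.pi (fun _ : Fin (k + 1) => κ) (noHitBefore k S ℓ ∩ {x | x ⟨ℓ, hℓ⟩ ∈ T})
      = (∏ j ∈ Finset.range ℓ, κ (S j)ᶜ) * κ T := by
  let t : ℕ → Set β := fun j => if j < ℓ then (S j)ᶜ else if j = ℓ then T else Set.univ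
  have hcyl : noHitBefore k S ℓ ∩ {x | x ⟨ℓ, hℓ⟩ ∈ T} = Set.univ.pi fun j : Fin (k + 1) => t j := by
    ext x
    simp only [noHitBefore, t, Set.mem_inter_iff, Set.mem_ofPred_eq, Set.mem_pi, Set.mem_univ,
      true_implies]
    constructor
    · rintro ⟨hno, hT⟩ j
      split_ifs with hlt heq
      · exact hno j hlt
      · exact (Fin.ext heq : j = ⟨ℓ, hℓ⟩) ▸ hT
      · trivial
    · intro h
      exact ⟨fun j hj => by simpa [hj] using h j, by simpa using h ⟨ℓ, hℓ⟩⟩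
  rw [hcyl, Measure.pi_pi, Fin.prod_univ_eq_prod_range (fun j => κ (t j)),
    ← Finset.prod_subset (Finset.range_subset_range.2 hℓ) fun j _ hj => ?_,
    Finset.prod_range_succ]
  · congr 1
    · exact Finset.prod_congr rfl fun j hj => by simp [t, Finset.mem_range.1 hj]
    · simp [t]
  · have : ℓ < j := by simpa using hj
    simp [t, this.not_gt, this.ne']

lemma pi_noHitBefore_succ (hℓ : ℓ < k + 1) :
    Measure.pi (fun _ : Fin (k + 1) => κ) (noHitBefore k S (ℓ + 1))
      = ∏ j ∈ Finset.range (ℓ + 1), κ (S j)ᶜ := by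
  have hsplit : noHitBefore k S (ℓ + 1) = noHitBefore k S ℓ ∩ {x | x ⟨ℓ, hℓ⟩ ∈ (S ℓ)ᶜ} := by
    ext x
    simp only [noHitBefore, Set.mem_inter_iff, Set.mem_ofPred_eq, Set.mem_compl_iff,
      Nat.lt_succ_iff_lt_or_eq, or_imp, forall_and]
    refine and_congr_right fun _ => ⟨fun h => h ⟨ℓ, hℓ⟩ rfl, fun h j hj => ?_⟩
    obtain rfl : j = ⟨ℓ, hℓ⟩ := Fin.ext hj
    exact h
  rw [hsplit, pi_noHitBefore_inter κ hℓ, Finset.prod_range_succ]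

lemma ae_exists_hit (hSk : κ (S k)ᶜ = 0) :
    ∀ᵐ x ∂Measure.pi (fun _ : Fin (k + 1) => κ), ∃ j : Fin (k + 1), x j ∈ S j := by
  have hnone : {x : Fin (k + 1) → β | ¬∃ j : Fin (k + 1), x j ∈ S j} = noHitBefore k S (k + 1) := by
    ext x
    simp [noHitBefore, Fin.is_le]
  rw [ae_iff, hnone, pi_noHitBefore_succ κ k.lt_succ_self, Finset.prod_range_succ, hSk, mul_zero]

lemma pi_firstHit_eq (hSk : κ (S k)ᶜ = 0) (hℓ : ℓ < k + 1) :
    Measure.pi (fun _ : Fin (k + 1) => κ) {x | firstHit k S x = ℓ}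
      = (∏ j ∈ Finset.range ℓ, κ (S j)ᶜ) * κ (S ℓ) := by
  rw [← pi_noHitBefore_inter κ hℓ]
  refine measure_congr ?_
  filter_upwards [ae_exists_hit κ hSk] with x hx
  exact propext ((firstHit_eq_iff hx hℓ).trans and_comm)

lemma pi_lt_firstHit (hSk : κ (S k)ᶜ = 0) (hℓ : ℓ < k + 1) :
    Measure.pi (fun _ : Fin (k + 1) => κ) {x | ℓ < firstHit k S x}
      = ∏ j ∈ Finset.range (ℓ + 1), κ (S j)ᶜ := by
  rw [← pi_noHitBefore_succ κ hℓ]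
  refine measure_congr ?_
  filter_upwards [ae_exists_hit κ hSk] with x hx
  exact propext (lt_firstHit_iff.trans (and_iff_right hx))

end FirstHit

section ProdCompare

variable {α γ : Type*} [MeasurableSpace α] [MeasurableSpace γ] (μ : Measure α) (ν : Measure γ)
  [SFinite ν] {f : α → ℕ} {g : γ → ℕ} {K : ℕ}

lemma prod_setOf_lt_eq_sum (hf : Measurable f) (hg : Measurable g) (hgK : ∀ y, g y < K) :
    μ.prod ν {ω | g ω.2 < f ω.1} = ∑ ℓ ∈ Finset.range K, μ {x | ℓ < f x} * ν {y | g y = ℓ} := by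
  have hset : {ω : α × γ | g ω.2 < f ω.1}
      = ⋃ ℓ ∈ Finset.range K, {x | ℓ < f x} ×ˢ {y | g y = ℓ} := by
    ext ω
    simp [hgK ω.2, eq_comm (a := g ω.2)]
  rw [hset, measure_biUnion_finset]
  · simp only [Measure.prod_prod]
  · exact fun ℓ _ ℓ' _ hne => Set.disjoint_left.2 fun ω h h' => hne (h.2.symm.trans h'.2)
  · exact fun ℓ _ => (hf measurableSet_Ioi).prod (hg (measurableSet_singleton ℓ))

lemma prod_setOf_eq_eq_sum (hf : Measurable f) (hg : Measurable g) (hgK : ∀ y, g y < K) :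
    μ.prod ν {ω | f ω.1 = g ω.2} = ∑ ℓ ∈ Finset.range K, μ {x | f x = ℓ} * ν {y | g y = ℓ} := by
  have hset : {ω : α × γ | f ω.1 = g ω.2}
      = ⋃ ℓ ∈ Finset.range K, {x | f x = ℓ} ×ˢ {y | g y = ℓ} := by
    ext ω
    simp only [Set.mem_ofPred_eq, Set.mem_iUnion, Set.mem_prod, Finset.mem_range, exists_prop]
    exact ⟨fun h => ⟨g ω.2, hgK ω.2, h, rfl⟩, fun ⟨_, _, h, h'⟩ => h.trans h'.symm⟩
  rw [hset, measure_biUnion_finset]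
  · simp only [Measure.prod_prod]
  · exact fun ℓ _ ℓ' _ hne => Set.disjoint_left.2 fun ω h h' => hne (h.2.symm.trans h'.2)
  · exact fun ℓ _ => (hf (measurableSet_singleton ℓ)).prod (hg (measurableSet_singleton ℓ))

end ProdCompare

section UniformDraws

instance : IsProbabilityMeasure (volume.restrict (Set.Icc (0 : ℝ) 1)) := ⟨by simp⟩

variable {N : ℕ} {c : ℝ}

lemma measurableSet_setOf_exists_le (N : ℕ) (c : ℝ) :
    MeasurableSet {y : Fin N → ℝ | ∃ i, y i ≤ c} := by
  rw [Set.ofPred_exists]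
  exact .iUnion fun i => measurableSet_le (measurable_pi_apply i) measurable_const

lemma pi_restrict_Icc_setOf_exists_le_compl (hc0 : 0 ≤ c) (hc1 : c ≤ 1) :
    (Measure.pi fun _ : Fin N => volume.restrict (Set.Icc (0 : ℝ) 1)) {y | ∃ i, y i ≤ c}ᶜ
      = ENNReal.ofReal ((1 - c) ^ N) := by
  have hpi : {y : Fin N → ℝ | ∃ i, y i ≤ c}ᶜ = Set.univ.pi fun _ => Set.Ioi c := by
    ext y
    simp
  have hIoi : Set.Ioi c ∩ Set.Icc 0 1 = Set.Ioc c 1 := by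
    ext x
    simp only [Set.mem_inter_iff, Set.mem_Ioi, Set.mem_Icc, Set.mem_Ioc]
    exact ⟨fun h => ⟨h.1, h.2.2⟩, fun h => ⟨h.1, hc0.trans h.1.le, h.2⟩⟩
  rw [hpi, Measure.pi_pi, Measure.restrict_apply measurableSet_Ioi, hIoi, Real.volume_Ioc,
    Finset.prod_const, Finset.card_univ, Fintype.card_fin, ENNReal.ofReal_pow (by linarith)]

lemma toReal_pi_restrict_Icc_setOf_exists_le_compl (hc0 : 0 ≤ c) (hc1 : c ≤ 1) :
    ((Measure.pi fun _ : Fin N => volume.restrict (Set.Icc (0 : ℝ) 1))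
      {y | ∃ i, y i ≤ c}ᶜ).toReal = (1 - c) ^ N := by
  rw [pi_restrict_Icc_setOf_exists_le_compl hc0 hc1,
    ENNReal.toReal_ofReal (pow_nonneg (by linarith) _)]

lemma toReal_pi_restrict_Icc_setOf_exists_le (hc0 : 0 ≤ c) (hc1 : c ≤ 1) :
    ((Measure.pi fun _ : Fin N => volume.restrict (Set.Icc (0 : ℝ) 1))
      {y | ∃ i, y i ≤ c}).toReal = 1 - (1 - c) ^ N := by
  rw [← toReal_pi_restrict_Icc_setOf_exists_le_compl hc0 hc1, ← measureReal_def,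
    ← measureReal_def, probReal_compl_eq_one_sub (measurableSet_setOf_exists_le N c),
    sub_sub_cancel]

variable {k ℓ : ℕ} {P : ℕ → ℝ}

open FirstHit

lemma pi_restrict_Icc_setOf_exists_le_compl_eq_zero (hN : 1 ≤ N) (hPk : P k = 1) :
    (Measure.pi fun _ : Fin N => volume.restrict (Set.Icc (0 : ℝ) 1))
      {y | ∃ i, y i ≤ P k}ᶜ = 0 := by
  rw [pi_restrict_Icc_setOf_exists_le_compl (by simp [hPk]) hPk.le, hPk, sub_self,
    zero_pow (by omega), ENNReal.ofReal_zero]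

lemma toReal_prod_pi_restrict_Icc_setOf_exists_le_compl (hP : ∀ i ≤ k, P i ∈ Set.Icc 0 1)
    (hℓ : ℓ ≤ k + 1) :
    ∏ i ∈ Finset.range ℓ, ((Measure.pi fun _ : Fin N => volume.restrict (Set.Icc (0 : ℝ) 1))
        {y | ∃ j, y j ≤ P i}ᶜ).toReal = ∏ i ∈ Finset.range ℓ, (1 - P i) ^ N :=
  Finset.prod_congr rfl fun i hi =>
    have hPi := hP i (by have := Finset.mem_range.1 hi; omega)
    toReal_pi_restrict_Icc_setOf_exists_le_compl hPi.1 hPi.2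

lemma toReal_pi_lt_firstHit_exists_le (hN : 1 ≤ N) (hP : ∀ i ≤ k, P i ∈ Set.Icc 0 1)
    (hPk : P k = 1) (hℓ : ℓ < k + 1) :
    ((Measure.pi fun _ : Fin (k + 1) => Measure.pi fun _ : Fin N =>
        volume.restrict (Set.Icc (0 : ℝ) 1))
      {x | ℓ < firstHit k (fun i => {y | ∃ j, y j ≤ P i}) x}).toReal
      = ∏ i ∈ Finset.range (ℓ + 1), (1 - P i) ^ N := by
  rw [pi_lt_firstHit _ (pi_restrict_Icc_setOf_exists_le_compl_eq_zero hN hPk) hℓ,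
    ENNReal.toReal_prod, toReal_prod_pi_restrict_Icc_setOf_exists_le_compl hP hℓ]

lemma toReal_pi_firstHit_eq_exists_le (hN : 1 ≤ N) (hP : ∀ i ≤ k, P i ∈ Set.Icc 0 1)
    (hPk : P k = 1) (hℓ : ℓ < k + 1) :
    ((Measure.pi fun _ : Fin (k + 1) => Measure.pi fun _ : Fin N =>
        volume.restrict (Set.Icc (0 : ℝ) 1))
      {x | firstHit k (fun i => {y | ∃ j, y j ≤ P i}) x = ℓ}).toReal
      = (∏ i ∈ Finset.range ℓ, (1 - P i) ^ N) * (1 - (1 - P ℓ) ^ N) := by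
  have hPℓ := hP ℓ (Nat.lt_succ_iff.1 hℓ)
  rw [pi_firstHit_eq _ (pi_restrict_Icc_setOf_exists_le_compl_eq_zero hN hPk) hℓ,
    ENNReal.toReal_mul, ENNReal.toReal_prod,
    toReal_prod_pi_restrict_Icc_setOf_exists_le_compl hP hℓ.le,
    toReal_pi_restrict_Icc_setOf_exists_le hPℓ.1 hPℓ.2]

end UniformDraws

lemma mem_Icc_of_le_succ {P : ℕ → ℝ} {k ℓ : ℕ} (hP0 : 0 ≤ P 0)
    (hmono : ∀ i, i < k → P i ≤ P (i + 1)) (hPk : P k = 1) (hℓ : ℓ ≤ k) : P ℓ ∈ Set.Icc 0 1 := by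
  have hmon : MonotoneOn P (Set.Iic k) :=
    monotoneOn_of_le_succ Set.ordConnected_Iic fun i _ _ hi => hmono i (Order.succ_le_iff.1 hi)
  exact ⟨hP0.trans (hmon (Nat.zero_le k) hℓ (Nat.zero_le ℓ)), hPk ▸ hmon hℓ Set.self_mem_Iic hℓ⟩

open FirstHit in
theorem stmt13_general (n m k : ℕ) (hn : 1 ≤ n) (hm : 1 ≤ m)
    (P : ℕ → ℝ) (hP0 : 0 < P 0) (hmono : ∀ i, i < k → P i ≤ P (i + 1)) (hPk : P k = 1)
    (μ : Measure ((Fin (k + 1) → Fin m → ℝ) × (Fin (k + 1) → Fin n → ℝ)))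
    (hμ : μ = (Measure.pi fun _ : Fin (k + 1) => Measure.pi fun _ : Fin m =>
        volume.restrict (Set.Icc (0 : ℝ) 1)).prod
      (Measure.pi fun _ : Fin (k + 1) => Measure.pi fun _ : Fin n =>
        volume.restrict (Set.Icc (0 : ℝ) 1)))
    (TA TB : (Fin (k + 1) → Fin m → ℝ) × (Fin (k + 1) → Fin n → ℝ) → ℕ)
    (hTA : ∀ ω, TA ω = sInf {ℓ : ℕ | ∃ h : ℓ < k + 1, ∃ i : Fin m, ω.1 ⟨ℓ, h⟩ i ≤ P ℓ})
    (hTB : ∀ ω, TB ω = sInf {ℓ : ℕ | ∃ h : ℓ < k + 1, ∃ i : Fin n, ω.2 ⟨ℓ, h⟩ i ≤ P ℓ}) :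
    (μ {ω | TB ω < TA ω}).toReal + (1 / 2) * (μ {ω | TA ω = TB ω}).toReal
      = (1 / 2) * ∑ ℓ ∈ Finset.range (k + 1),
          (1 - (1 - P ℓ) ^ n) * (1 + (1 - P ℓ) ^ m) *
            ∏ i ∈ Finset.range ℓ, (1 - P i) ^ (n + m) := by
  have hP : ∀ ℓ ≤ k, P ℓ ∈ Set.Icc 0 1 := fun ℓ => mem_Icc_of_le_succ hP0.le hmono hPk
  obtain rfl : TA = fun ω => firstHit k (fun ℓ => {y | ∃ i, y i ≤ P ℓ}) ω.1 := funext hTA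
  obtain rfl : TB = fun ω => firstHit k (fun ℓ => {y | ∃ i, y i ≤ P ℓ}) ω.2 := funext hTB
  have hmeas : ∀ N, Measurable (firstHit k fun ℓ => {y : Fin N → ℝ | ∃ i, y i ≤ P ℓ}) :=
    fun N => measurable_firstHit fun ℓ => measurableSet_setOf_exists_le N (P ℓ)
  have hbound : ∀ x : Fin (k + 1) → Fin n → ℝ,
      firstHit k (fun ℓ => {y : Fin n → ℝ | ∃ i, y i ≤ P ℓ}) x < k + 1 :=
    fun x => Nat.lt_succ_of_le (firstHit_le _ x)
  subst hμ
  rw [prod_setOf_lt_eq_sum _ _ (hmeas m) (hmeas n) hbound,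
    prod_setOf_eq_eq_sum _ _ (hmeas m) (hmeas n) hbound,
    ENNReal.toReal_sum fun ℓ _ => ENNReal.mul_ne_top (measure_ne_top _ _) (measure_ne_top _ _),
    ENNReal.toReal_sum fun ℓ _ => ENNReal.mul_ne_top (measure_ne_top _ _) (measure_ne_top _ _),
    Finset.mul_sum, Finset.mul_sum, ← Finset.sum_add_distrib]
  refine Finset.sum_congr rfl fun ℓ hℓ => ?_
  have hℓk : ℓ < k + 1 := Finset.mem_range.1 hℓ
  rw [ENNReal.toReal_mul, ENNReal.toReal_mul, toReal_pi_lt_firstHit_exists_le hm hP hPk hℓk,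
    toReal_pi_firstHit_eq_exists_le hn hP hPk hℓk, toReal_pi_firstHit_eq_exists_le hm hP hPk hℓk,
    Finset.prod_range_succ]
  simp only [pow_add, Finset.prod_mul_distrib]
  ring

/-- Block-nursing competition: `A` has `m` independent uniform hash draws per
slot and `B` has `n`; the first success slot of a player is the first slot `ℓ`
where one of its draws is `≤ P_ℓ`.  `A` loses if `B` succeeds strictly earlier,
plus half the probability of a tie.  Formula for the losing probability. -/
theorem stmt13 (n m k : ℕ) (hn : 1 ≤ n) (hm : 1 ≤ m) (hk : 1 ≤ k)
    (P : ℕ → ℝ) (hP0 : 0 < P 0) (hmono : ∀ i, i < k → P i ≤ P (i + 1)) (hPk : P k = 1)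
    (μ : Measure ((Fin (k + 1) → Fin m → ℝ) × (Fin (k + 1) → Fin n → ℝ)))
    (hμ : μ = (Measure.pi fun _ : Fin (k + 1) => Measure.pi fun _ : Fin m =>
        volume.restrict (Set.Icc (0 : ℝ) 1)).prod
      (Measure.pi fun _ : Fin (k + 1) => Measure.pi fun _ : Fin n =>
        volume.restrict (Set.Icc (0 : ℝ) 1)))
    (TA TB : (Fin (k + 1) → Fin m → ℝ) × (Fin (k + 1) → Fin n → ℝ) → ℕ)
    (hTA : ∀ ω, TA ω = sInf {ℓ : ℕ | ∃ h : ℓ < k + 1, ∃ i : Fin m, ω.1 ⟨ℓ, h⟩ i ≤ P ℓ})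
    (hTB : ∀ ω, TB ω = sInf {ℓ : ℕ | ∃ h : ℓ < k + 1, ∃ i : Fin n, ω.2 ⟨ℓ, h⟩ i ≤ P ℓ}) :
    (μ {ω | TB ω < TA ω}).toReal + (1 / 2) * (μ {ω | TA ω = TB ω}).toReal
      = (1 / 2) * ∑ ℓ ∈ Finset.range (k + 1),
          (1 - (1 - P ℓ) ^ n) * (1 + (1 - P ℓ) ^ m) *
            ∏ i ∈ Finset.range ℓ, (1 - P i) ^ (n + m) :=
  stmt13_general n m k hn hm P hP0 hmono hPk μ hμ TA TB hTA hTB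
end

section
/- Let $0 < p < 1$ and $L(1/p) = \frac{\log(1+p^2) - \log 2}{2 \log p}$ (the value of $L(x) = \frac{\log((x+p)p)-\log(px+1)}{2\log p}$ at $x = 1/p$). Then $0 < L(1/p) \leq \frac{\log 2}{2 \log(1/p)}$, with $L(1/p) \to \frac{\log 2}{2\log(1/p)} \cdot (1 + o(1))$ as $p \to 0$. -/
/-! `L(1/p)` factors as `(log 2 / (2 log(1/p))) · (1 - log(1 + p²) / log 2)`. For `0 < p < 1` the
second factor lies in `(0, 1]`, since `1 ≤ 1 + p² < 2`, and it tends to `1` as `p → 0`. -/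

/-- Asymptotic losing probability `L(x)` of a block nurser of relative power `x`. -/
noncomputable def nurseL (p x : ℝ) : ℝ :=
  (Real.log ((x + p) * p) - Real.log (p * x + 1)) / (2 * Real.log p)

open Real Filter Topology

lemma nurseL_one_div {p : ℝ} (hp : p ≠ 0) :
    nurseL p (1 / p) = (log (1 + p ^ 2) - log 2) / (2 * log p) := by
  have hnum : (1 / p + p) * p = 1 + p ^ 2 := by field_simp
  have hden : p * (1 / p) + 1 = 2 := by field_simp; norm_num
  rw [nurseL, hnum, hden]

lemma nurseL_one_div_eq_mul {p : ℝ} (hp : p ≠ 0) :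
    nurseL p (1 / p) = log 2 / (2 * log (1 / p)) * (1 - log (1 + p ^ 2) / log 2) := by
  have hlog2 : log 2 ≠ 0 := (log_pos one_lt_two).ne'
  rw [nurseL_one_div hp, one_div, log_inv]
  by_cases hlogp : log p = 0
  · simp [hlogp]
  · field_simp
    ring

lemma one_sub_log_one_add_sq_div_log_two_mem_Ioc {p : ℝ} (hp : |p| < 1) :
    1 - log (1 + p ^ 2) / log 2 ∈ Set.Ioc 0 1 := by
  have hlog2 : 0 < log 2 := log_pos one_lt_two
  have hsq : p ^ 2 < 1 := by simpa using pow_lt_one₀ (abs_nonneg p) hp two_ne_zero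
  have hlt : log (1 + p ^ 2) < log 2 := log_lt_log (by positivity) (by linarith)
  have hnonneg : 0 ≤ log (1 + p ^ 2) := log_nonneg (by nlinarith)
  constructor
  · rw [sub_pos, div_lt_one hlog2]
    exact hlt
  · rw [sub_le_self_iff]
    positivity

lemma tendsto_one_sub_log_one_add_sq_div_log_two :
    Tendsto (fun p : ℝ => 1 - log (1 + p ^ 2) / log 2) (𝓝 0) (𝓝 1) := by
  have hcont : ContinuousAt (fun p : ℝ => 1 - log (1 + p ^ 2) / log 2) 0 :=
    continuousAt_const.sub
      (((continuousAt_log (by norm_num)).comp (by fun_prop)).div_const _)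
  simpa using hcont.tendsto

/-- `0 < L(1/p) ≤ log 2 / (2 log(1/p))`, with
`L(1/p) = (log 2 / (2 log(1/p)))(1 + o(1))` as `p → 0⁺`. -/
theorem stmt18 :
    (∀ p : ℝ, 0 < p → p < 1 →
      nurseL p (1 / p) = (Real.log (1 + p ^ 2) - Real.log 2) / (2 * Real.log p) ∧
      0 < nurseL p (1 / p) ∧
      nurseL p (1 / p) ≤ Real.log 2 / (2 * Real.log (1 / p))) ∧
    Filter.Tendsto
      (fun p : ℝ => nurseL p (1 / p) / (Real.log 2 / (2 * Real.log (1 / p))))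
      (nhdsWithin 0 (Set.Ioi 0)) (nhds 1) := by
  have main_term_pos : ∀ p : ℝ, 0 < p → p < 1 → 0 < log 2 / (2 * log (1 / p)) :=
    fun p hp hp1 ↦ div_pos (log_pos one_lt_two)
      (mul_pos two_pos (log_pos (one_lt_one_div hp hp1)))
  constructor
  · intro p hp hp1
    obtain ⟨hcorr_pos, hcorr_le⟩ :=
      one_sub_log_one_add_sq_div_log_two_mem_Ioc (p := p) (by rwa [abs_of_pos hp])
    have hmain := main_term_pos p hp hp1
    refine ⟨nurseL_one_div hp.ne', ?_⟩
    rw [nurseL_one_div_eq_mul hp.ne']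
    exact ⟨mul_pos hmain hcorr_pos, mul_le_of_le_one_right hmain.le hcorr_le⟩
  · refine (tendsto_one_sub_log_one_add_sq_div_log_two.mono_left nhdsWithin_le_nhds).congr' ?_
    filter_upwards [Ioo_mem_nhdsGT one_pos] with p ⟨hp, hp1⟩
    rw [nurseL_one_div_eq_mul hp.ne', mul_div_cancel_left₀ _ (main_term_pos p hp hp1).ne']
end
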